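/- arXiv:2506.04868 — 7 statements merged into one kernel-verified Lean document; each statement's English description precedes it below -/
import Mathlib

section
/- Assume strong ignorability and positivity, and let e⁰(X) be a version of E[A | σ(X)] with δ ≤ e⁰(X) ≤ 1−δ almost surely. Let m₁, m₀ : 𝒳 → ℝ be arbitrary bounded measurable functions (a possibly misspecified outcome model). Then E[ m₁(X) − m₀(X) + (A / e⁰(X))·(Y − m₁(X)) − ((1−A)/(1 − e⁰(X)))·(Y − m₀(X)) ] = E[Y₁ − Y₀] = τ. -/
/-!
Let `G = σ(X) ⊔ σ(Y₁, Y₀)`. Conditional independence of `A` and `(Y₁, Y₀)` given `σ(X)` gives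
`E[A | G] = E[A | σ(X)] = e⁰(X)`: both sides have the same integral over every rectangle
`a ∩ b` with `a ∈ σ(X)`, `b ∈ σ(Y₁, Y₀)`, and these rectangles form a π-system generating `G`.

Since `A ∈ {0, 1}` and `Y = Y_A`, the AIPW integrand equals `u + A v` with `u, v` `G`-measurable,
`v = (Y₁ - m₁(X)) / e⁰(X) + (Y₀ - m₀(X)) / (1 - e⁰(X))`. The tower property lets us replace `A`
by `e⁰(X)`, and then `u + e⁰(X) v = Y₁ - Y₀` pointwise, whatever `m₁, m₀` are.
-/

open MeasureTheory ProbabilityTheory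

section

open Set MeasurableSpace

theorem IsPiSystem.image2_inter {α : Type*} {S T : Set (Set α)} (hS : IsPiSystem S)
    (hT : IsPiSystem T) : IsPiSystem (image2 (· ∩ ·) S T) := by
  rintro _ ⟨a, ha, b, hb, rfl⟩ _ ⟨c, hc, d, hd, rfl⟩ hne
  rw [inter_inter_inter_comm] at hne ⊢
  exact ⟨a ∩ c, hS a ha c hc (hne.mono inter_subset_left),
    b ∩ d, hT b hb d hd (hne.mono inter_subset_right), rfl⟩

theorem MeasurableSpace.sup_eq_generateFrom_image2_inter {α : Type*}
    (m₁ m₂ : MeasurableSpace α) :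
    m₁ ⊔ m₂ = generateFrom (image2 (· ∩ ·) {s | MeasurableSet[m₁] s} {t | MeasurableSet[m₂] t}) := by
  refine le_antisymm (sup_le ?_ ?_) (generateFrom_le ?_)
  · exact fun s hs => measurableSet_generateFrom ⟨s, hs, univ, .univ, inter_univ s⟩
  · exact fun t ht => measurableSet_generateFrom ⟨univ, .univ, t, ht, univ_inter t⟩
  · rintro _ ⟨s, hs, t, ht, rfl⟩
    exact (le_sup_left (a := m₁) (b := m₂) s hs).inter (le_sup_right (a := m₁) (b := m₂) t ht)

-- `mΩ` is bound last so that it, not a sub-σ-algebra, is the instance found by elaboration.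
variable {Ω : Type*} {m m₁ m₂ : MeasurableSpace Ω} {mΩ : MeasurableSpace Ω} {μ : Measure Ω}

theorem setIntegral_eq_of_isPiSystem {E : Type*} [NormedAddCommGroup E] [NormedSpace ℝ E]
    (hm : m ≤ mΩ) {C : Set (Set Ω)} (h_eq : m = generateFrom C)
    (hC : IsPiSystem C) (h_univ : univ ∈ C) {f g : Ω → E} (hf : Integrable f μ)
    (hg : Integrable g μ) (h_basic : ∀ t ∈ C, ∫ ω in t, f ω ∂μ = ∫ ω in t, g ω ∂μ)
    {t : Set Ω} (ht : MeasurableSet[m] t) : ∫ ω in t, f ω ∂μ = ∫ ω in t, g ω ∂μ := by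
  induction t, ht using MeasurableSpace.induction_on_inter h_eq hC with
  | empty => simp
  | basic t ht => exact h_basic t ht
  | compl t ht ih =>
    rw [setIntegral_compl (hm t ht) hf, setIntegral_compl (hm t ht) hg, ih,
      ← setIntegral_univ, h_basic univ h_univ, setIntegral_univ]
  | iUnion s hd hs ih =>
    rw [integral_iUnion (fun i => hm _ (hs i)) hd hf.integrableOn,
      integral_iUnion (fun i => hm _ (hs i)) hd hg.integrableOn]
    exact tsum_congr ih

theorem setIntegral_condExp_mul_of_stronglyMeasurable (hm : m ≤ mΩ)
    [SigmaFinite (μ.trim hm)] {f g : Ω → ℝ} (hf : StronglyMeasurable[m] f)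
    (hg : Integrable g μ) (hgf : Integrable (g * f) μ) {s : Set Ω} (hs : MeasurableSet[m] s) :
    ∫ ω in s, μ[g | m] ω * f ω ∂μ = ∫ ω in s, g ω * f ω ∂μ := by
  refine (setIntegral_congr_ae (hm s hs) ?_).trans (setIntegral_condExp hm hgf hs)
  filter_upwards [condExp_mul_of_stronglyMeasurable_right hf hgf hg] with ω hω _
  exact hω.symm

theorem condExp_indicator_sup_ae_eq_of_condIndep [StandardBorelSpace Ω] [IsFiniteMeasure μ]
    (hm : m ≤ mΩ) (hm₁ : m₁ ≤ mΩ) (hm₂ : m₂ ≤ mΩ)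
    (h : CondIndep m m₁ m₂ hm μ) {s : Set Ω} (hs : MeasurableSet[m₂] s) :
    μ⟦s | m ⊔ m₁⟧ =ᵐ[μ] μ⟦s | m⟧ := by
  have hint : ∀ t, MeasurableSet[mΩ] t → Integrable (t.indicator fun _ => (1 : ℝ)) μ :=
    fun t ht => (integrable_const 1).indicator ht
  refine (ae_eq_condExp_of_forall_setIntegral_eq (sup_le hm hm₁) (hint s (hm₂ s hs))
    (fun _ _ _ => integrable_condExp.integrableOn) (fun t ht _ => ?_)
    (stronglyMeasurable_condExp.mono le_sup_left :
      StronglyMeasurable[m ⊔ m₁] (μ⟦s | m⟧)).aestronglyMeasurable).symm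
  refine setIntegral_eq_of_isPiSystem (sup_le hm hm₁) (sup_eq_generateFrom_image2_inter m m₁)
    ((@isPiSystem_measurableSet Ω m).image2_inter (@isPiSystem_measurableSet Ω m₁))
    ⟨univ, .univ, univ, .univ, univ_inter _⟩ integrable_condExp (hint s (hm₂ s hs)) ?_ ht
  rintro _ ⟨a, ha, b, hb, rfl⟩
  dsimp only
  have hb' : MeasurableSet b := hm₁ b hb
  have hprod : μ⟦b ∩ s | m⟧ =ᵐ[μ] μ⟦b | m⟧ * μ⟦s | m⟧ :=
    (condIndep_iff m m₁ m₂ hm hm₁ hm₂ μ).mp h b s hb hs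
  have hbs : Integrable (b.indicator (fun _ => (1 : ℝ)) * μ⟦s | m⟧) μ :=
    ((integrable_condExp (m := m) (f := s.indicator fun _ => (1 : ℝ))).indicator hb').congr
      (.of_forall fun ω => by by_cases hω : ω ∈ b <;> simp [hω])
  calc ∫ ω in a ∩ b, (μ⟦s | m⟧) ω ∂μ
      = ∫ ω in a, b.indicator (fun _ => (1 : ℝ)) ω * (μ⟦s | m⟧) ω ∂μ := by
        rw [← setIntegral_indicator hb']
        simp_rw [← Set.indicator_mul_left, one_mul]
    _ = ∫ ω in a, (μ⟦b | m⟧) ω * (μ⟦s | m⟧) ω ∂μ :=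
        (setIntegral_condExp_mul_of_stronglyMeasurable hm stronglyMeasurable_condExp
          (hint b hb') hbs ha).symm
    _ = ∫ ω in a, (μ⟦b ∩ s | m⟧) ω ∂μ :=
        setIntegral_congr_ae (hm a ha) (hprod.mono fun ω h _ => h.symm)
    _ = ∫ ω in a, (b ∩ s).indicator (fun _ => (1 : ℝ)) ω ∂μ :=
        setIntegral_condExp hm (hint _ (hb'.inter (hm₂ s hs))) ha
    _ = ∫ ω in a ∩ b, s.indicator (fun _ => (1 : ℝ)) ω ∂μ := by
        rw [← Set.indicator_indicator, setIntegral_indicator hb']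

theorem condExp_sup_comap_ae_eq_of_condIndepFun [StandardBorelSpace Ω] [IsFiniteMeasure μ]
    {β : Type*} [MeasurableSpace β] (hm : m ≤ mΩ) {W : Ω → β} {A : Ω → ℝ} (hW : Measurable W)
    (hA : Measurable A) (hA01 : ∀ ω, A ω = 0 ∨ A ω = 1) (h : CondIndepFun m hm W A μ) :
    μ[A | m ⊔ MeasurableSpace.comap W inferInstance] =ᵐ[μ] μ[A | m] := by
  have hA_eq : A = (A ⁻¹' {1}).indicator fun _ => 1 := by
    ext ω
    rcases hA01 ω with h0 | h1 <;> simp [*]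
  rw [hA_eq]
  exact condExp_indicator_sup_ae_eq_of_condIndep hm hW.comap_le hA.comap_le
    ((condIndepFun_iff_condIndep m hm W A μ).mp h) ⟨{1}, measurableSet_singleton 1, rfl⟩

theorem integral_mul_eq_of_condExp_ae_eq (hm : m ≤ mΩ) [SigmaFinite (μ.trim hm)]
    {f g h : Ω → ℝ} (hf : StronglyMeasurable[m] f) (hg : Integrable g μ)
    (hgf : Integrable (g * f) μ) (hgh : μ[g | m] =ᵐ[μ] h) :
    ∫ ω, g ω * f ω ∂μ = ∫ ω, h ω * f ω ∂μ := by
  rw [← setIntegral_univ, ← setIntegral_condExp_mul_of_stronglyMeasurable hm hf hg hgf .univ,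
    setIntegral_univ]
  exact integral_congr_ae (hgh.mono fun ω hω => by simp only [hω])

theorem MeasureTheory.Integrable.div_of_le_abs {f g : Ω → ℝ} (hf : Integrable f μ)
    (hg : AEStronglyMeasurable g μ) {δ : ℝ} (hδ : 0 < δ) (hδg : ∀ᵐ ω ∂μ, δ ≤ |g ω|) :
    Integrable (fun ω => f ω / g ω) μ := by
  refine (hf.bdd_mul hg.aemeasurable.inv.aestronglyMeasurable (c := δ⁻¹) ?_).congr
    (.of_forall fun ω => (div_eq_inv_mul _ _).symm)
  filter_upwards [hδg] with ω hω
  rw [Pi.inv_apply, norm_inv, Real.norm_eq_abs]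
  exact inv_anti₀ hδ hω

theorem integral_mul_comp_eq_of_condIndepFun [StandardBorelSpace Ω] [IsFiniteMeasure μ]
    {𝓧 β : Type*} [MeasurableSpace 𝓧] [MeasurableSpace β] {X : Ω → 𝓧} {W : Ω → β} {A : Ω → ℝ}
    (hX : Measurable X) (hW : Measurable W) (hA : Measurable A) (hA01 : ∀ ω, A ω = 0 ∨ A ω = 1)
    (h : CondIndepFun (MeasurableSpace.comap X inferInstance) hX.comap_le W A μ) {e : Ω → ℝ}
    (he : e =ᵐ[μ] μ[A | MeasurableSpace.comap X inferInstance]) {φ : 𝓧 × β → ℝ}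
    (hφ : Measurable φ) (hφ_int : Integrable (fun ω => φ (X ω, W ω)) μ) :
    ∫ ω, A ω * φ (X ω, W ω) ∂μ = ∫ ω, e ω * φ (X ω, W ω) ∂μ := by
  have hA_bd : ∀ ω, ‖A ω‖ ≤ 1 := fun ω => by rcases hA01 ω with h | h <;> simp [h]
  have hXW : Measurable[MeasurableSpace.comap X inferInstance ⊔
      MeasurableSpace.comap W inferInstance] fun ω => (X ω, W ω) :=
    ((comap_measurable X).mono le_sup_left le_rfl).prodMk
      ((comap_measurable W).mono le_sup_right le_rfl)
  exact integral_mul_eq_of_condExp_ae_eq (sup_le hX.comap_le hW.comap_le)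
    (hφ.comp hXW).stronglyMeasurable (.of_bound hA.aestronglyMeasurable 1 (.of_forall hA_bd))
    (hφ_int.bdd_mul hA.aestronglyMeasurable (.of_forall hA_bd))
    ((condExp_sup_comap_ae_eq_of_condIndepFun _ hW hA hA01 h).trans he.symm)

end

/-- Double robustness of the AIPW functional, propensity-score-correct half:
under strong ignorability and positivity, with the true propensity score `e⁰(X)`
(a version of `E[A | σ(X)]`) and arbitrary bounded measurable outcome models `m₁, m₀`,
`E[ m₁(X) − m₀(X) + (A/e⁰(X))·(Y − m₁(X)) − ((1−A)/(1−e⁰(X)))·(Y − m₀(X)) ] = E[Y₁ − Y₀] = τ`. -/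
theorem stmt5 {Ω 𝓧 : Type*} [MeasurableSpace Ω] [StandardBorelSpace Ω] [MeasurableSpace 𝓧]
    (P : Measure Ω) [IsProbabilityMeasure P]
    (A : Ω → ℝ) (X : Ω → 𝓧) (Y₁ Y₀ Y : Ω → ℝ)
    (hA : Measurable A) (hA01 : ∀ ω, A ω = 0 ∨ A ω = 1) (hX : Measurable X)
    (hY₁ : Integrable Y₁ P) (hY₀ : Integrable Y₀ P)
    (hYmeas : Measurable Y₁ ∧ Measurable Y₀)
    (hY : ∀ ω, Y ω = A ω * Y₁ ω + (1 - A ω) * Y₀ ω)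
    (hignor : CondIndepFun (MeasurableSpace.comap X inferInstance) hX.comap_le
      (fun ω => (Y₁ ω, Y₀ ω)) A P)
    (e0 : 𝓧 → ℝ) (he0 : Measurable e0)
    (hver : (fun ω => e0 (X ω)) =ᵐ[P] P[A | MeasurableSpace.comap X inferInstance])
    (δ : ℝ) (hδ : δ ∈ Set.Ioo (0 : ℝ) (1 / 2))
    (hpos : ∀ᵐ ω ∂P, e0 (X ω) ∈ Set.Icc δ (1 - δ))
    (m₁ m₀ : 𝓧 → ℝ) (hm₁ : Measurable m₁) (hm₀ : Measurable m₀)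
    (hm₁bd : ∃ C : ℝ, ∀ x, |m₁ x| ≤ C) (hm₀bd : ∃ C : ℝ, ∀ x, |m₀ x| ≤ C)
    (τ : ℝ) (hτ : τ = ∫ ω, (Y₁ ω - Y₀ ω) ∂P) :
    ∫ ω, (m₁ (X ω) - m₀ (X ω)
        + (A ω / e0 (X ω)) * (Y ω - m₁ (X ω))
        - ((1 - A ω) / (1 - e0 (X ω))) * (Y ω - m₀ (X ω))) ∂P = τ := by
  obtain ⟨hY₁m, hY₀m⟩ := hYmeas
  obtain ⟨C₁, hC₁⟩ := hm₁bd
  obtain ⟨C₀, hC₀⟩ := hm₀bd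
  set e : Ω → ℝ := fun ω => e0 (X ω)
  have he_bd : ∀ᵐ ω ∂P, δ ≤ e ω ∧ δ ≤ 1 - e ω := hpos.mono fun ω h => ⟨h.1, by linarith [h.2]⟩
  have hm₁X : Integrable (fun ω => m₁ (X ω)) P :=
    .of_bound (hm₁.comp hX).aestronglyMeasurable C₁ (.of_forall fun ω => hC₁ (X ω))
  have hm₀X : Integrable (fun ω => m₀ (X ω)) P :=
    .of_bound (hm₀.comp hX).aestronglyMeasurable C₀ (.of_forall fun ω => hC₀ (X ω))
  set f₁ : Ω → ℝ := fun ω => (Y₁ ω - m₁ (X ω)) / e ω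
  set f₀ : Ω → ℝ := fun ω => (Y₀ ω - m₀ (X ω)) / (1 - e ω)
  have hf₁ : Integrable f₁ P := (hY₁.sub hm₁X).div_of_le_abs (he0.comp hX).aestronglyMeasurable
    hδ.1 (he_bd.mono fun ω h => h.1.trans (le_abs_self _))
  have hf₀ : Integrable f₀ P := (hY₀.sub hm₀X).div_of_le_abs
    (measurable_const.sub (he0.comp hX)).aestronglyMeasurable hδ.1
    (he_bd.mono fun ω h => h.2.trans (le_abs_self _))
  have hu : Integrable (fun ω => m₁ (X ω) - m₀ (X ω) - f₀ ω) P := (hm₁X.sub hm₀X).sub hf₀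
  have hAv : Integrable (fun ω => A ω * (f₁ ω + f₀ ω)) P :=
    (hf₁.add hf₀).bdd_mul hA.aestronglyMeasurable (c := 1)
      (.of_forall fun ω => by rcases hA01 ω with h | h <;> simp [h])
  have hev : Integrable (fun ω => e ω * (f₁ ω + f₀ ω)) P :=
    (hf₁.add hf₀).bdd_mul (he0.comp hX).aestronglyMeasurable (c := 1) (he_bd.mono fun ω h => by
      rw [Real.norm_eq_abs, abs_le]; constructor <;> linarith [h.1, h.2, hδ.1])
  have hkey : ∫ ω, A ω * (f₁ ω + f₀ ω) ∂P = ∫ ω, e ω * (f₁ ω + f₀ ω) ∂P :=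
    integral_mul_comp_eq_of_condIndepFun hX (hY₁m.prodMk hY₀m) hA hA01 hignor hver
      (φ := fun p => (p.2.1 - m₁ p.1) / e0 p.1 + (p.2.2 - m₀ p.1) / (1 - e0 p.1)) (by fun_prop)
      (hf₁.add hf₀)
  calc _ = ∫ ω, (m₁ (X ω) - m₀ (X ω) - f₀ ω + A ω * (f₁ ω + f₀ ω)) ∂P := by
        refine integral_congr_ae (.of_forall fun ω => ?_)
        simp only [hY, f₁, f₀]
        rcases hA01 ω with h | h <;> rw [h] <;> ring
    _ = ∫ ω, (m₁ (X ω) - m₀ (X ω) - f₀ ω + e ω * (f₁ ω + f₀ ω)) ∂P := by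
        rw [integral_add hu hAv, integral_add hu hev, hkey]
    _ = τ := by
        rw [hτ]
        refine integral_congr_ae (he_bd.mono fun ω h => ?_)
        have : e ω ≠ 0 := by linarith [h.1, hδ.1]
        have : 1 - e ω ≠ 0 := by linarith [h.2, hδ.1]
        simp only [f₁, f₀]
        field_simp
        ring
end

section
/- Assume strong ignorability and positivity, with the true propensity score e⁰(X), a version of E[A | σ(X)], satisfying δ ≤ e⁰(X) ≤ 1−δ almost surely. Let m₁, m₀ : 𝒳 → ℝ be measurable and integrable functions that are correctly specified, i.e. E[A·Y | σ(X)] = m₁(X)·e⁰(X) and E[(1−A)·Y | σ(X)] = m₀(X)·(1 − e⁰(X)) almost surely. Let e : 𝒳 → [δ′, 1−δ′] be an arbitrary measurable function with δ′ ∈ (0, 1/2) (a possibly misspecified propensity model). Then E[ m₁(X) − m₀(X) + (A / e(X))·(Y − m₁(X)) − ((1−A)/(1 − e(X)))·(Y − m₀(X)) ] = E[Y₁ − Y₀] = τ. -/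
/-!
Correctness of the outcome model identifies `m₁(X) = E[Y₁ | X]`: by ignorability
`E[A Y | X] = E[A Y₁ | X] = e⁰(X) E[Y₁ | X]`, and positivity lets `e⁰(X)` be cancelled, so
`E[m₁(X)] = E[Y₁]`. The residual `A (Y - m₁(X))` then has conditional mean
`m₁(X) e⁰(X) - m₁(X) e⁰(X) = 0` given `X`, so its product with any bounded `X`-measurable weight,
in particular `1 / e(X)` for an arbitrary propensity model `e`, has mean zero. The control arm is
the same argument for `1 - A`, `Y₀`, `1 - e⁰`, `1 - e`.
-/

open MeasureTheory ProbabilityTheory MeasurableSpace Set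

theorem ProbabilityTheory.Kernel.IndepFun.ae_indepFun {α Ω : Type*} {mα : MeasurableSpace α}
    {mΩ : MeasurableSpace Ω} {κ : Kernel α Ω} [IsMarkovKernel κ] {μ : Measure α} {f g : Ω → ℝ}
    (hfg : Kernel.IndepFun f g κ μ) (hf : Measurable f) (hg : Measurable g) :
    ∀ᵐ a ∂μ, ProbabilityTheory.IndepFun f g (κ a) := by
  -- The rational half-lines generate the Borel sets, so countably many product identities suffice.
  have hrat : ∀ᵐ a ∂μ, ∀ q r : ℚ, κ a (f ⁻¹' Iio (q : ℝ) ∩ g ⁻¹' Iio (r : ℝ))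
      = κ a (f ⁻¹' Iio (q : ℝ)) * κ a (g ⁻¹' Iio (r : ℝ)) := by
    simp only [ae_all_iff]
    exact fun q r => hfg _ _ ⟨_, measurableSet_Iio, rfl⟩ ⟨_, measurableSet_Iio, rfl⟩
  filter_upwards [hrat] with a ha
  have hgen : ∀ h : Ω → ℝ,
      MeasurableSpace.comap h Real.measurableSpace
        = generateFrom ((h ⁻¹' ·) '' ⋃ q : ℚ, {Iio (q : ℝ)}) := by
    intro h
    rw [← comap_generateFrom, ← Real.borel_eq_generateFrom_Iio_rat]
    rfl
  refine ProbabilityTheory.IndepSets.indep hf.comap_le hg.comap_le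
    (Real.isPiSystem_Iio_rat.comap f) (Real.isPiSystem_Iio_rat.comap g) (hgen f) (hgen g) ?_
  rw [ProbabilityTheory.IndepSets_iff]
  rintro _ _ ⟨_, hq, rfl⟩ ⟨_, hr, rfl⟩
  simp only [mem_iUnion, mem_singleton_iff] at hq hr
  obtain ⟨q, rfl⟩ := hq
  obtain ⟨r, rfl⟩ := hr
  exact ha q r

section CondExp

variable {Ω : Type*} {m mΩ : MeasurableSpace Ω} {P : Measure Ω} [IsFiniteMeasure P]

theorem ProbabilityTheory.CondIndepFun.condExp_mul_ae_eq [StandardBorelSpace Ω] {hm : m ≤ mΩ}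
    {f g : Ω → ℝ} (hfg : CondIndepFun m hm f g P) (hf : Measurable f) (hg : Measurable g)
    (hfi : Integrable f P) (hgi : Integrable g P) (hfgi : Integrable (f * g) P) :
    P[f * g|m] =ᵐ[P] P[f|m] * P[g|m] := by
  filter_upwards [ae_of_ae_trim hm (Kernel.IndepFun.ae_indepFun hfg hf hg),
    condExp_ae_eq_integral_condExpKernel hm hfgi, condExp_ae_eq_integral_condExpKernel hm hfi,
    condExp_ae_eq_integral_condExpKernel hm hgi, hfi.condExpKernel_ae, hgi.condExpKernel_ae]
    with ω hind hfg hf hg hfi hgi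
  rw [hfg, Pi.mul_apply, hf, hg]
  exact hind.integral_fun_mul_eq_mul_integral hfi.aestronglyMeasurable hgi.aestronglyMeasurable

theorem integral_mul_eq_zero_of_condExp_ae_eq_zero (hm : m ≤ mΩ) {w F : Ω → ℝ}
    (hw : StronglyMeasurable[m] w) (hwF : Integrable (w * F) P) (hF : Integrable F P)
    (hF0 : P[F|m] =ᵐ[P] 0) :
    ∫ ω, w ω * F ω ∂P = 0 := by
  have hwF0 : P[w * F|m] =ᵐ[P] 0 := by
    filter_upwards [condExp_mul_of_stronglyMeasurable_left hw hwF hF, hF0] with ω h h0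
    rw [h, Pi.mul_apply, h0, Pi.zero_apply, mul_zero]
  rw [← integral_condExp hm]
  exact (integral_congr_ae hwF0).trans (integral_zero _ _)

end CondExp

section OutcomeModel

variable {Ω : Type*} {m mΩ : MeasurableSpace Ω} {P : Measure Ω} {T Z Y μ π w : Ω → ℝ} {C D : ℝ}

theorem integrable_add_mul_residual (hμi : Integrable μ P) (hYi : Integrable Y P)
    (hT : AEStronglyMeasurable T P) (hTb : ∀ᵐ ω ∂P, ‖T ω‖ ≤ C)
    (hw : AEStronglyMeasurable w P) (hwb : ∀ᵐ ω ∂P, ‖w ω‖ ≤ D) :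
    Integrable (fun ω => μ ω + w ω * (T ω * (Y ω - μ ω))) P :=
  hμi.add (((hYi.sub hμi).bdd_mul hT hTb).bdd_mul hw hwb)

variable [IsFiniteMeasure P]

theorem ae_eq_condExp_of_mul_ae_eq_condExp_mul [StandardBorelSpace Ω] {hm : m ≤ mΩ}
    (hind : CondIndepFun m hm Z T P) (hZ : Measurable Z) (hT : Measurable T)
    (hZi : Integrable Z P) (hTi : Integrable T P) (hTZi : Integrable (T * Z) P)
    (hπ : π =ᵐ[P] P[T|m]) (hπ0 : ∀ᵐ ω ∂P, π ω ≠ 0) (hcorr : μ * π =ᵐ[P] P[T * Z|m]) :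
    μ =ᵐ[P] P[Z|m] := by
  filter_upwards [hcorr, hind.symm.condExp_mul_ae_eq hT hZ hTi hZi hTZi, hπ, hπ0]
    with ω hcorr hprod hπ hπ0
  rw [Pi.mul_apply, hprod, Pi.mul_apply, ← hπ] at hcorr
  exact mul_right_cancel₀ hπ0 (hcorr.trans (mul_comm _ _))

theorem integral_add_mul_residual_eq_integral [StandardBorelSpace Ω] (hm : m ≤ mΩ)
    (hind : CondIndepFun m hm Z T P) (hT : Measurable T) (hTb : ∀ᵐ ω ∂P, ‖T ω‖ ≤ C)
    (hZ : Measurable Z) (hZi : Integrable Z P) (hYi : Integrable Y P) (hTY : T * Y = T * Z)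
    (hπ : π =ᵐ[P] P[T|m]) (hπ0 : ∀ᵐ ω ∂P, π ω ≠ 0)
    (hμ : StronglyMeasurable[m] μ) (hμi : Integrable μ P) (hcorr : μ * π =ᵐ[P] P[T * Y|m])
    (hw : StronglyMeasurable[m] w) (hwb : ∀ᵐ ω ∂P, ‖w ω‖ ≤ D) :
    ∫ ω, (μ ω + w ω * (T ω * (Y ω - μ ω))) ∂P = ∫ ω, Z ω ∂P := by
  have hTi : Integrable T P := .of_bound hT.aestronglyMeasurable C hTb
  have hTYi : Integrable (T * Y) P := hYi.bdd_mul hT.aestronglyMeasurable hTb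
  have hμTi : Integrable (μ * T) P := hμi.bdd_mul hT.aestronglyMeasurable hTb |>.congr
    (.of_forall fun ω => mul_comm _ _)
  have hres : Integrable (T * (Y - μ)) P := (hYi.sub hμi).bdd_mul hT.aestronglyMeasurable hTb
  have hμZ : μ =ᵐ[P] P[Z|m] := ae_eq_condExp_of_mul_ae_eq_condExp_mul hind hZ hT hZi hTi
    (hTY ▸ hTYi) hπ hπ0 (hTY ▸ hcorr)
  have hres0 : P[T * (Y - μ)|m] =ᵐ[P] 0 := by
    have hsplit : T * (Y - μ) = T * Y - μ * T := by ring
    filter_upwards [hsplit ▸ condExp_sub hTYi hμTi m,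
      condExp_mul_of_stronglyMeasurable_left hμ hμTi hTi, hcorr, hπ] with ω h hμT hcorr hπ
    simp only [h, Pi.sub_apply, hμT, Pi.mul_apply, ← hcorr, hπ, sub_self, Pi.zero_apply]
  have hwres : Integrable (fun ω => w ω * (T ω * (Y ω - μ ω))) P :=
    hres.bdd_mul (hw.mono hm).aestronglyMeasurable hwb
  have hwres0 : ∫ ω, w ω * (T ω * (Y ω - μ ω)) ∂P = 0 :=
    integral_mul_eq_zero_of_condExp_ae_eq_zero hm hw hwres hres hres0
  rw [integral_add hμi hwres, hwres0, add_zero, integral_congr_ae hμZ, integral_condExp hm]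

end OutcomeModel

theorem norm_inv_le_inv_of_le {δ x : ℝ} (hδ : 0 < δ) (h : δ ≤ x) : ‖x⁻¹‖ ≤ δ⁻¹ := by
  rw [norm_inv, Real.norm_of_nonneg (hδ.le.trans h)]
  exact inv_anti₀ hδ h

theorem integrable_and_integral_aipw_arm {Ω 𝓧 : Type*} [MeasurableSpace Ω] [StandardBorelSpace Ω]
    [MeasurableSpace 𝓧] {P : Measure Ω} [IsFiniteMeasure P] {X : Ω → 𝓧} (hX : Measurable X)
    {T Z Y : Ω → ℝ} {π μ e : 𝓧 → ℝ} {C δ' : ℝ}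
    (hind : CondIndepFun (MeasurableSpace.comap X inferInstance) hX.comap_le Z T P)
    (hT : Measurable T) (hTb : ∀ᵐ ω ∂P, ‖T ω‖ ≤ C) (hZ : Measurable Z) (hZi : Integrable Z P)
    (hYi : Integrable Y P) (hTY : T * Y = T * Z)
    (hπ : (fun ω => π (X ω)) =ᵐ[P] P[T | MeasurableSpace.comap X inferInstance])
    (hπ0 : ∀ᵐ ω ∂P, π (X ω) ≠ 0) (hμ : Measurable μ) (hμi : Integrable (fun ω => μ (X ω)) P)
    (hcorr : (fun ω => μ (X ω) * π (X ω))
      =ᵐ[P] P[T * Y | MeasurableSpace.comap X inferInstance])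
    (he : Measurable e) (hδ' : 0 < δ') (heδ' : ∀ x, δ' ≤ e x) :
    Integrable (fun ω => μ (X ω) + T ω / e (X ω) * (Y ω - μ (X ω))) P ∧
      ∫ ω, (μ (X ω) + T ω / e (X ω) * (Y ω - μ (X ω))) ∂P = ∫ ω, Z ω ∂P := by
  have hXm : Measurable[MeasurableSpace.comap X inferInstance] X := comap_measurable X
  have hwb : ∀ᵐ ω ∂P, ‖(e (X ω))⁻¹‖ ≤ δ'⁻¹ :=
    .of_forall fun ω => norm_inv_le_inv_of_le hδ' (heδ' _)
  have hdiv : (fun ω => μ (X ω) + T ω / e (X ω) * (Y ω - μ (X ω)))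
      = fun ω => μ (X ω) + (e (X ω))⁻¹ * (T ω * (Y ω - μ (X ω))) := by
    funext ω; ring
  rw [hdiv]
  exact ⟨integrable_add_mul_residual hμi hYi hT.aestronglyMeasurable hTb
      (he.comp hX).inv.aestronglyMeasurable hwb,
    integral_add_mul_residual_eq_integral hX.comap_le hind hT hTb hZ hZi hYi hTY hπ hπ0
      (hμ.comp hXm).stronglyMeasurable hμi hcorr (he.comp hXm).inv.stronglyMeasurable hwb⟩

theorem stmt6_general {Ω 𝓧 : Type*} [MeasurableSpace Ω] [StandardBorelSpace Ω] [MeasurableSpace 𝓧]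
    (P : Measure Ω) [IsProbabilityMeasure P]
    (A : Ω → ℝ) (X : Ω → 𝓧) (Y₁ Y₀ Y : Ω → ℝ)
    (hA : Measurable A) (hA01 : ∀ ω, A ω = 0 ∨ A ω = 1) (hX : Measurable X)
    (hY₁ : Integrable Y₁ P) (hY₀ : Integrable Y₀ P)
    (hYmeas : Measurable Y₁ ∧ Measurable Y₀)
    (hY : ∀ ω, Y ω = A ω * Y₁ ω + (1 - A ω) * Y₀ ω)
    (hignor : CondIndepFun (MeasurableSpace.comap X inferInstance) hX.comap_le
      (fun ω => (Y₁ ω, Y₀ ω)) A P)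
    (e0 : 𝓧 → ℝ)
    (hver : (fun ω => e0 (X ω)) =ᵐ[P] P[A | MeasurableSpace.comap X inferInstance])
    (δ : ℝ) (hδ : δ ∈ Set.Ioo (0 : ℝ) (1 / 2))
    (hpos : ∀ᵐ ω ∂P, e0 (X ω) ∈ Set.Icc δ (1 - δ))
    (m₁ m₀ : 𝓧 → ℝ) (hm₁ : Measurable m₁) (hm₀ : Measurable m₀)
    (hm₁int : Integrable (fun ω => m₁ (X ω)) P)
    (hm₀int : Integrable (fun ω => m₀ (X ω)) P)
    (hcorr₁ : (fun ω => m₁ (X ω) * e0 (X ω))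
      =ᵐ[P] P[fun ω => A ω * Y ω | MeasurableSpace.comap X inferInstance])
    (hcorr₀ : (fun ω => m₀ (X ω) * (1 - e0 (X ω)))
      =ᵐ[P] P[fun ω => (1 - A ω) * Y ω | MeasurableSpace.comap X inferInstance])
    (δ' : ℝ) (hδ' : δ' ∈ Set.Ioo (0 : ℝ) (1 / 2))
    (e : 𝓧 → ℝ) (he : Measurable e) (hebd : ∀ x, e x ∈ Set.Icc δ' (1 - δ'))
    (τ : ℝ) (hτ : τ = ∫ ω, (Y₁ ω - Y₀ ω) ∂P) :
    ∫ ω, (m₁ (X ω) - m₀ (X ω)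
        + (A ω / e (X ω)) * (Y ω - m₁ (X ω))
        - ((1 - A ω) / (1 - e (X ω))) * (Y ω - m₀ (X ω))) ∂P = τ := by
  have hAb : ∀ᵐ ω ∂P, ‖A ω‖ ≤ 1 := .of_forall fun ω => by rcases hA01 ω with h | h <;> simp [h]
  have h1Ab : ∀ᵐ ω ∂P, ‖1 - A ω‖ ≤ 1 :=
    .of_forall fun ω => by rcases hA01 ω with h | h <;> simp [h]
  have hYi : Integrable Y P := by
    rw [funext hY]
    exact (hY₁.bdd_mul hA.aestronglyMeasurable hAb).add
      (hY₀.bdd_mul (measurable_const.sub hA).aestronglyMeasurable h1Ab)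
  have hAY : A * Y = A * Y₁ := funext fun ω => by rcases hA01 ω with h | h <;> simp [hY, h]
  have h1AY : (1 - A) * Y = (1 - A) * Y₀ :=
    funext fun ω => by rcases hA01 ω with h | h <;> simp [hY, h]
  have h1e0 : (fun ω => 1 - e0 (X ω)) =ᵐ[P] P[1 - A | MeasurableSpace.comap X inferInstance] := by
    have h := condExp_sub (integrable_const 1) (.of_bound hA.aestronglyMeasurable 1 hAb)
      (MeasurableSpace.comap X inferInstance)
    rw [condExp_const hX.comap_le] at h
    filter_upwards [hver, h] with ω hω h
    rw [hω]
    exact h.symm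
  obtain ⟨hint₁, harm₁⟩ := integrable_and_integral_aipw_arm hX (T := A) (Z := Y₁) (π := e0)
    (hignor.comp measurable_fst measurable_id) hA hAb hYmeas.1 hY₁ hYi hAY hver
    (hpos.mono fun ω h => (hδ.1.trans_le h.1).ne') hm₁ hm₁int hcorr₁ he hδ'.1 (fun x => (hebd x).1)
  obtain ⟨hint₀, harm₀⟩ := integrable_and_integral_aipw_arm hX (T := fun ω => 1 - A ω) (Z := Y₀)
    (π := fun x => 1 - e0 x) (e := fun x => 1 - e x)
    (hignor.comp measurable_snd (measurable_const.sub measurable_id)) (measurable_const.sub hA)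
    h1Ab hYmeas.2 hY₀ hYi h1AY h1e0 (hpos.mono fun ω h => by linarith [h.2, hδ.1]) hm₀ hm₀int
    hcorr₀ (measurable_const.sub he) hδ'.1 (fun x => by linarith [(hebd x).2])
  calc _ = ∫ ω, ((m₁ (X ω) + A ω / e (X ω) * (Y ω - m₁ (X ω)))
        - (m₀ (X ω) + (1 - A ω) / (1 - e (X ω)) * (Y ω - m₀ (X ω)))) ∂P := by
        congr 1; funext ω; ring
    _ = τ := by rw [integral_sub hint₁ hint₀, harm₁, harm₀, hτ, integral_sub hY₁ hY₀]

/-- Double robustness of the AIPW functional, outcome-model-correct half: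
under strong ignorability and positivity, with correctly specified outcome regressions
`m₁, m₀` (`E[A·Y | σ(X)] = m₁(X)·e⁰(X)` and `E[(1−A)·Y | σ(X)] = m₀(X)·(1−e⁰(X))` a.s.)
and an arbitrary measurable propensity model `e : 𝒳 → [δ′, 1−δ′]`,
`E[ m₁(X) − m₀(X) + (A/e(X))·(Y − m₁(X)) − ((1−A)/(1−e(X)))·(Y − m₀(X)) ] = E[Y₁ − Y₀] = τ`. -/
theorem stmt6 {Ω 𝓧 : Type*} [MeasurableSpace Ω] [StandardBorelSpace Ω] [MeasurableSpace 𝓧]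
    (P : Measure Ω) [IsProbabilityMeasure P]
    (A : Ω → ℝ) (X : Ω → 𝓧) (Y₁ Y₀ Y : Ω → ℝ)
    (hA : Measurable A) (hA01 : ∀ ω, A ω = 0 ∨ A ω = 1) (hX : Measurable X)
    (hY₁ : Integrable Y₁ P) (hY₀ : Integrable Y₀ P)
    (hYmeas : Measurable Y₁ ∧ Measurable Y₀)
    (hY : ∀ ω, Y ω = A ω * Y₁ ω + (1 - A ω) * Y₀ ω)
    (hignor : CondIndepFun (MeasurableSpace.comap X inferInstance) hX.comap_le
      (fun ω => (Y₁ ω, Y₀ ω)) A P)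
    (e0 : 𝓧 → ℝ) (he0 : Measurable e0)
    (hver : (fun ω => e0 (X ω)) =ᵐ[P] P[A | MeasurableSpace.comap X inferInstance])
    (δ : ℝ) (hδ : δ ∈ Set.Ioo (0 : ℝ) (1 / 2))
    (hpos : ∀ᵐ ω ∂P, e0 (X ω) ∈ Set.Icc δ (1 - δ))
    (m₁ m₀ : 𝓧 → ℝ) (hm₁ : Measurable m₁) (hm₀ : Measurable m₀)
    (hm₁int : Integrable (fun ω => m₁ (X ω)) P)
    (hm₀int : Integrable (fun ω => m₀ (X ω)) P)
    (hcorr₁ : (fun ω => m₁ (X ω) * e0 (X ω))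
      =ᵐ[P] P[fun ω => A ω * Y ω | MeasurableSpace.comap X inferInstance])
    (hcorr₀ : (fun ω => m₀ (X ω) * (1 - e0 (X ω)))
      =ᵐ[P] P[fun ω => (1 - A ω) * Y ω | MeasurableSpace.comap X inferInstance])
    (δ' : ℝ) (hδ' : δ' ∈ Set.Ioo (0 : ℝ) (1 / 2))
    (e : 𝓧 → ℝ) (he : Measurable e) (hebd : ∀ x, e x ∈ Set.Icc δ' (1 - δ'))
    (τ : ℝ) (hτ : τ = ∫ ω, (Y₁ ω - Y₀ ω) ∂P) :
    ∫ ω, (m₁ (X ω) - m₀ (X ω)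
        + (A ω / e (X ω)) * (Y ω - m₁ (X ω))
        - ((1 - A ω) / (1 - e (X ω))) * (Y ω - m₀ (X ω))) ∂P = τ :=
  stmt6_general P A X Y₁ Y₀ Y hA hA01 hX hY₁ hY₀ hYmeas hY hignor e0 hver δ hδ hpos m₁ m₀ hm₁ hm₀
    hm₁int hm₀int hcorr₁ hcorr₀ δ' hδ' e he hebd τ hτ
end

section
/- Let P be a probability measure on a measurable space Θ and let B : Θ → ℝ be a bounded measurable function with P(B > 0) > 0 and P(B < 0) > 0. Then the function φ(λ) = ∫ B·exp(λ·B) dP is continuous and strictly increasing on ℝ, φ(λ) → +∞ as λ → +∞, φ(λ) → −∞ as λ → −∞, and there exists a unique λ* ∈ ℝ with φ(λ*) = 0; equivalently, the entropically tilted distribution with density proportional to exp(λ*·B) relative to P satisfies the moment constraint that the tilted mean of B equals 0, and λ* is the unique such tilting parameter. -/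
/-!
`φ` is the derivative of the moment generating function `λ ↦ ∫ exp (λ B) dP`, which is finite
everywhere because `B` is bounded. Its own derivative `∫ B² exp (λ B) dP` is positive since `B`
is not a.e. zero, so `φ` is continuous and strictly increasing. For `λ ≥ 0` every term
`B exp (λ B)` is at least `B`, while on `{B ≥ ε}` it is at least `ε exp (λ ε)`; choosing `ε > 0`
with `P {B ≥ ε} > 0` forces `φ → +∞`, and the limit at `-∞` is the same fact for `-B`. The zero
then exists by the intermediate value theorem, and the normaliser `∫ exp (λ B) dP` is positive.
-/

open MeasureTheory Filter ProbabilityTheory Real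

section

variable {Θ : Type*} [MeasurableSpace Θ] {P : Measure Θ} {B : Θ → ℝ}

lemma integrableExpSet_eq_univ_of_abs_le [IsFiniteMeasure P] (hB : AEMeasurable B P) {M : ℝ}
    (hM : ∀ᵐ θ ∂P, |B θ| ≤ M) : integrableExpSet B P = Set.univ :=
  Set.eq_univ_of_forall fun _ ↦ integrable_exp_mul_of_mem_Icc hB (hM.mono fun _ ↦ abs_le.1)

lemma integrableExpSet_neg (h : integrableExpSet B P = Set.univ) :
    integrableExpSet (-B) P = Set.univ :=
  Set.eq_univ_of_forall fun t ↦ by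
    have : -t ∈ integrableExpSet B P := h ▸ Set.mem_univ _
    simpa [integrableExpSet] using this

lemma le_mul_exp_mul {t : ℝ} (ht : 0 ≤ t) (b : ℝ) : b ≤ b * exp (t * b) := by
  rcases le_total 0 b with hb | hb
  · exact le_mul_of_one_le_right hb (one_le_exp (mul_nonneg ht hb))
  · exact le_mul_of_le_one_right hb (exp_le_one_iff.2 (mul_nonpos_of_nonneg_of_nonpos ht hb))

lemma exists_pos_measure_setOf_le {f : Θ → ℝ} (h : 0 < P {θ | 0 < f θ}) :
    ∃ ε > 0, 0 < P {θ | ε ≤ f θ} := by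
  by_contra! hε
  have hcover : {θ | 0 < f θ} ⊆ ⋃ n : ℕ, {θ | 1 / (n + 1 : ℝ) ≤ f θ} := by
    intro θ (hθ : 0 < f θ)
    obtain ⟨n, hn⟩ := exists_nat_one_div_lt hθ
    exact Set.mem_iUnion.2 ⟨n, hn.le⟩
  exact h.ne' (measure_mono_null hcover (measure_iUnion_null fun n ↦
    nonpos_iff_eq_zero.1 (hε _ Nat.one_div_pos_of_nat)))

lemma integral_neg_mul_exp (t : ℝ) :
    ∫ θ, (-B) θ * exp (t * (-B) θ) ∂P = -∫ θ, B θ * exp (-t * B θ) ∂P := by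
  rw [← integral_neg]
  congr with θ
  simp only [Pi.neg_apply, neg_mul, mul_neg]

lemma hasDerivAt_integral_mul_exp (h : integrableExpSet B P = Set.univ) (t : ℝ) :
    HasDerivAt (fun t ↦ ∫ θ, B θ * exp (t * B θ) ∂P) (∫ θ, B θ ^ 2 * exp (t * B θ) ∂P) t := by
  simpa using hasDerivAt_integral_pow_mul_exp_real (X := B) (μ := P) (by simp [h]) 1

lemma integrable_mul_exp (h : integrableExpSet B P = Set.univ) (t : ℝ) :
    Integrable (fun θ ↦ B θ * exp (t * B θ)) P := by
  simpa using integrable_pow_mul_exp_of_mem_interior_integrableExpSet (X := B) (μ := P) (v := t)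
    (by simp [h]) 1

lemma continuous_integral_mul_exp (h : integrableExpSet B P = Set.univ) :
    Continuous fun t ↦ ∫ θ, B θ * exp (t * B θ) ∂P :=
  continuous_iff_continuousAt.2 fun t ↦ (hasDerivAt_integral_mul_exp h t).continuousAt

lemma integral_sq_mul_exp_pos (h : integrableExpSet B P = Set.univ)
    (hB : 0 < P (Function.support B)) (t : ℝ) : 0 < ∫ θ, B θ ^ 2 * exp (t * B θ) ∂P := by
  rw [integral_pos_iff_support_of_nonneg (fun θ ↦ by positivity)
    (integrable_pow_mul_exp_of_mem_interior_integrableExpSet (by simp [h]) 2)]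
  convert hB using 2
  ext θ
  simp

lemma strictMono_integral_mul_exp (h : integrableExpSet B P = Set.univ)
    (hB : 0 < P (Function.support B)) : StrictMono fun t ↦ ∫ θ, B θ * exp (t * B θ) ∂P :=
  strictMono_of_deriv_pos fun t ↦
    (hasDerivAt_integral_mul_exp h t).deriv ▸ integral_sq_mul_exp_pos h hB t

lemma le_integral_mul_exp [IsFiniteMeasure P] (h : integrableExpSet B P = Set.univ)
    (hBm : Measurable B) {ε t : ℝ} (hε : 0 ≤ ε) (ht : 0 ≤ t) :
    exp (t * ε) * (ε * P.real {θ | ε ≤ B θ}) - ∫ θ, |B θ| ∂P ≤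
      ∫ θ, B θ * exp (t * B θ) ∂P := by
  set s := {θ | ε ≤ B θ}
  have hs : MeasurableSet s := hBm measurableSet_Ici
  have hBint : Integrable B P := integrable_of_mem_interior_integrableExpSet (by simp [h])
  have hlhs : Integrable (fun θ ↦ s.indicator (fun _ ↦ ε * exp (t * ε)) θ - |B θ|) P :=
    ((integrable_const _).indicator hs).sub hBint.abs
  have hbound : ∀ θ, s.indicator (fun _ ↦ ε * exp (t * ε)) θ - |B θ| ≤ B θ * exp (t * B θ) := by
    intro θ
    by_cases hθ : θ ∈ s
    · rw [Set.indicator_of_mem hθ]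
      have hεB : ε ≤ B θ := hθ
      have : ε * exp (t * ε) ≤ B θ * exp (t * B θ) :=
        mul_le_mul hεB (exp_le_exp.2 (by gcongr)) (exp_pos _).le (hε.trans hεB)
      linarith [abs_nonneg (B θ)]
    · rw [Set.indicator_of_notMem hθ]
      linarith [neg_abs_le (B θ), le_mul_exp_mul ht (B θ)]
  calc exp (t * ε) * (ε * P.real s) - ∫ θ, |B θ| ∂P
      = ∫ θ, s.indicator (fun _ ↦ ε * exp (t * ε)) θ - |B θ| ∂P := by
        rw [integral_sub ((integrable_const _).indicator hs) hBint.abs,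
          integral_indicator_const _ hs, smul_eq_mul]
        ring
    _ ≤ ∫ θ, B θ * exp (t * B θ) ∂P := integral_mono hlhs (integrable_mul_exp h t) hbound

lemma tendsto_integral_mul_exp_atTop [IsFiniteMeasure P] (h : integrableExpSet B P = Set.univ)
    (hBm : Measurable B) (hpos : 0 < P {θ | 0 < B θ}) :
    Tendsto (fun t ↦ ∫ θ, B θ * exp (t * B θ) ∂P) atTop atTop := by
  obtain ⟨ε, hε, hs⟩ := exists_pos_measure_setOf_le hpos
  have hc : 0 < ε * P.real {θ | ε ≤ B θ} :=
    mul_pos hε (ENNReal.toReal_pos hs.ne' (measure_ne_top _ _))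
  have hlower : Tendsto (fun t ↦ exp (t * ε) * (ε * P.real {θ | ε ≤ B θ}) - ∫ θ, |B θ| ∂P)
      atTop atTop :=
    tendsto_atTop_add_const_right _ _
      ((tendsto_exp_atTop.comp (tendsto_id.atTop_mul_const hε)).atTop_mul_const hc)
  exact tendsto_atTop_mono' _ ((eventually_ge_atTop 0).mono fun t ht ↦
    le_integral_mul_exp h hBm hε.le ht) hlower

lemma tendsto_integral_mul_exp_atBot [IsFiniteMeasure P] (h : integrableExpSet B P = Set.univ)
    (hBm : Measurable B) (hneg : 0 < P {θ | B θ < 0}) :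
    Tendsto (fun t ↦ ∫ θ, B θ * exp (t * B θ) ∂P) atBot atBot := by
  have hnegB := tendsto_integral_mul_exp_atTop (integrableExpSet_neg h) hBm.neg
    (by simpa using hneg)
  simp_rw [integral_neg_mul_exp, tendsto_neg_atTop_iff] at hnegB
  simpa [Function.comp_def] using hnegB.comp tendsto_neg_atBot_atTop

end

/-- Well-posedness of the entropic-tilting parameter equation. If `P` is a
probability measure and `B` is bounded measurable with `P(B > 0) > 0` and `P(B < 0) > 0`,
then `φ(λ) = ∫ B·exp(λ·B) dP` is continuous and strictly increasing, tends to `+∞` at `+∞`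
and to `−∞` at `−∞`, and has a unique zero `λ*`; moreover the tilted mean of `B` vanishes
at `λ` iff `φ(λ) = 0`, so `λ*` is the unique tilting parameter satisfying the moment
constraint. -/
theorem stmt8 {Θ : Type*} [MeasurableSpace Θ] (P : Measure Θ) [IsProbabilityMeasure P]
    (B : Θ → ℝ) (hBmeas : Measurable B) (hBbd : ∃ M : ℝ, ∀ θ, |B θ| ≤ M)
    (hpos : 0 < P {θ | 0 < B θ}) (hneg : 0 < P {θ | B θ < 0})
    (φ : ℝ → ℝ) (hφ : ∀ lam : ℝ, φ lam = ∫ θ, B θ * Real.exp (lam * B θ) ∂P) :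
    Continuous φ ∧ StrictMono φ ∧
    Tendsto φ atTop atTop ∧ Tendsto φ atBot atBot ∧
    (∃! lamStar : ℝ, φ lamStar = 0) ∧
    (∀ lam : ℝ,
      (∫ θ, B θ * Real.exp (lam * B θ) ∂P) / (∫ θ, Real.exp (lam * B θ) ∂P) = 0
        ↔ φ lam = 0) := by
  obtain ⟨M, hM⟩ := hBbd
  have hB : integrableExpSet B P = Set.univ :=
    integrableExpSet_eq_univ_of_abs_le hBmeas.aemeasurable (ae_of_all _ hM)
  obtain rfl : φ = fun t ↦ ∫ θ, B θ * exp (t * B θ) ∂P := funext hφ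
  have hcont := continuous_integral_mul_exp hB
  have hmono := strictMono_integral_mul_exp hB (hpos.trans_le (measure_mono fun _ h ↦ h.ne'))
  have htop := tendsto_integral_mul_exp_atTop hB hBmeas hpos
  have hbot := tendsto_integral_mul_exp_atBot hB hBmeas hneg
  refine ⟨hcont, hmono, htop, hbot, ?_, fun t ↦ ?_⟩
  · obtain ⟨t, ht⟩ := hcont.surjective htop hbot 0
    exact ⟨t, ht, fun s hs ↦ hmono.injective (hs.trans ht.symm)⟩
  · have hZ : mgf B P t ≠ 0 := (mgf_pos (hB ▸ Set.mem_univ t : t ∈ integrableExpSet B P)).ne'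
    exact div_eq_zero_iff.trans (or_iff_left hZ)
end

section
/- Let (Θ, 𝒜, μ) be a measure space, and for each n ∈ ℕ let p_n : Θ → [0, ∞) be a measurable probability density with respect to μ (∫ p_n dμ = 1) and g_n : Θ → ℝ a measurable function. Assume: (i) there is M < ∞ with |g_n(θ)| ≤ M for all n and all θ ∈ Θ; (ii) there is a family of measurable sets (A_ε)_{ε>0} such that for each ε > 0, ∫_{Θ∖A_ε} p_n dμ → 0 as n → ∞; and (iii) for every η > 0 there exist ε > 0 and N ∈ ℕ such that sup_{θ ∈ A_ε} |g_n(θ)| ≤ η for all n ≥ N. Then ∫ |exp(g_n) − 1|·p_n dμ → 0 as n → ∞, and consequently, with z_n = ∫ exp(g_n)·p_n dμ (which satisfies z_n ≥ exp(−M) > 0), the total variation between the tilted density and the original density vanishes: ∫ | exp(g_n)·p_n / z_n − p_n | dμ → 0 as n → ∞. -/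
open MeasureTheory Filter

/-! On the concentration set `A ε` the tilt `exp g_n` is uniformly close to `1`, while off it
`|exp g_n - 1| ≤ exp M - 1` is bounded and the `p_n`-mass vanishes; so the weighted
`L¹(p_n)` distance `I_n` of `exp g_n` from `1` tends to `0`. Normalising costs at most a factor
`2 / z_n`, since `|1 - z_n| ≤ I_n`, and `z_n ≥ exp (-M)` keeps that factor bounded. -/

theorem abs_exp_sub_one_le_exp_abs_sub_one (x : ℝ) : |Real.exp x - 1| ≤ Real.exp |x| - 1 := by
  rcases le_or_gt 0 x with hx | hx
  · rw [abs_of_nonneg hx, abs_of_nonneg (sub_nonneg.2 (Real.one_le_exp hx))]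
  · rw [abs_of_neg hx, abs_of_nonpos (sub_nonpos.2 (Real.exp_le_one_iff.2 hx.le))]
    linarith [Real.add_one_le_exp x, Real.add_one_le_exp (-x)]

theorem abs_exp_sub_one_le_of_abs_le_log {x η : ℝ} (hη : 0 < η) (hx : |x| ≤ Real.log (1 + η)) :
    |Real.exp x - 1| ≤ η :=
  calc |Real.exp x - 1| ≤ Real.exp |x| - 1 := abs_exp_sub_one_le_exp_abs_sub_one x
    _ ≤ Real.exp (Real.log (1 + η)) - 1 := by gcongr
    _ = η := by rw [Real.exp_log (by linarith)]; ring

section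

variable {Θ : Type*} [MeasurableSpace Θ] {μ : Measure Θ}

theorem integral_mul_le_of_le_on {h p : Θ → ℝ} {A : Set Θ} {η C : ℝ} (hA : MeasurableSet A)
    (hp0 : 0 ≤ p) (hp : Integrable p μ) (hh : AEStronglyMeasurable h μ)
    (hhC : ∀ θ, |h θ| ≤ C) (hhη : ∀ θ ∈ A, h θ ≤ η) :
    ∫ θ, h θ * p θ ∂μ ≤ η * ∫ θ in A, p θ ∂μ + C * ∫ θ in Aᶜ, p θ ∂μ := by
  have hhp : Integrable (fun θ => h θ * p θ) μ :=
    hp.bdd_mul hh (Eventually.of_forall hhC)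
  rw [← integral_add_compl hA hhp, ← integral_const_mul, ← integral_const_mul]
  gcongr ?_ + ?_
  · exact setIntegral_mono_on hhp.integrableOn (hp.const_mul η).integrableOn hA
      fun θ hθ => mul_le_mul_of_nonneg_right (hhη θ hθ) (hp0 θ)
  · exact setIntegral_mono_on hhp.integrableOn (hp.const_mul C).integrableOn hA.compl
      fun θ _ => mul_le_mul_of_nonneg_right ((le_abs_self _).trans (hhC θ)) (hp0 θ)

theorem tendsto_integral_mul_of_concentration {h p : ℕ → Θ → ℝ} {A : ℝ → Set Θ} {C : ℝ}
    (hA : ∀ ε > (0 : ℝ), MeasurableSet (A ε)) (hp0 : ∀ n, 0 ≤ p n)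
    (hp : ∀ n, Integrable (p n) μ) (hp1 : ∀ n, ∫ θ, p n θ ∂μ = 1)
    (hh : ∀ n, AEStronglyMeasurable (h n) μ) (hh0 : ∀ n, 0 ≤ h n) (hhC : ∀ n θ, h n θ ≤ C)
    (hconc : ∀ ε > (0 : ℝ), Tendsto (fun n => ∫ θ in (A ε)ᶜ, p n θ ∂μ) atTop (nhds 0))
    (hsmall : ∀ η > (0 : ℝ), ∃ ε > (0 : ℝ), ∃ N : ℕ, ∀ n ≥ N, ∀ θ ∈ A ε, h n θ ≤ η) :
    Tendsto (fun n => ∫ θ, h n θ * p n θ ∂μ) atTop (nhds 0) := by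
  refine tendsto_order.2 ⟨fun a ha => Eventually.of_forall fun n =>
    ha.trans_le (integral_nonneg fun θ => mul_nonneg (hh0 n θ) (hp0 n θ)), fun δ hδ => ?_⟩
  obtain ⟨ε, hε, N, hN⟩ := hsmall (δ / 2) (half_pos hδ)
  have htail : ∀ᶠ n in atTop, C * ∫ θ in (A ε)ᶜ, p n θ ∂μ < δ / 2 :=
    ((hconc ε hε).const_mul C).eventually (gt_mem_nhds (by simpa using half_pos hδ))
  filter_upwards [htail, eventually_ge_atTop N] with n hn_tail hn
  have hmass : ∫ θ in A ε, p n θ ∂μ ≤ 1 :=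
    hp1 n ▸ setIntegral_le_integral (hp n) (Eventually.of_forall (hp0 n))
  calc ∫ θ, h n θ * p n θ ∂μ
      ≤ δ / 2 * ∫ θ in A ε, p n θ ∂μ + C * ∫ θ in (A ε)ᶜ, p n θ ∂μ :=
        integral_mul_le_of_le_on (hA ε hε) (hp0 n) (hp n) (hh n)
          (fun θ => (abs_of_nonneg (hh0 n θ)).trans_le (hhC n θ)) (hN n hn)
    _ < δ / 2 * 1 + δ / 2 := add_lt_add_of_le_of_lt (by gcongr) hn_tail
    _ = δ := by ring

section Tilt

variable {p f : Θ → ℝ} (hp0 : 0 ≤ p) (hp : Integrable p μ) (hp1 : ∫ θ, p θ ∂μ = 1)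
  (hfp : Integrable (fun θ => f θ * p θ) μ)
include hp0 hp hp1 hfp

theorem le_integral_mul_of_le {c : ℝ} (hf : ∀ θ, c ≤ f θ) : c ≤ ∫ θ, f θ * p θ ∂μ :=
  calc c = ∫ θ, c * p θ ∂μ := by rw [integral_const_mul, hp1, mul_one]
    _ ≤ ∫ θ, f θ * p θ ∂μ :=
      integral_mono (hp.const_mul c) hfp fun θ => mul_le_mul_of_nonneg_right (hf θ) (hp0 θ)

theorem abs_one_sub_integral_mul_le :
    |1 - ∫ θ, f θ * p θ ∂μ| ≤ ∫ θ, |f θ - 1| * p θ ∂μ := by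
  have h : 1 - ∫ θ, f θ * p θ ∂μ = -∫ θ, (f θ - 1) * p θ ∂μ := by
    simp only [sub_mul, one_mul]
    rw [integral_sub hfp hp, hp1, neg_sub]
  rw [h, abs_neg]
  refine (abs_integral_le_integral_abs).trans_eq (integral_congr_ae (Eventually.of_forall ?_))
  intro θ
  simp only [abs_mul, abs_of_nonneg (hp0 θ)]

theorem integral_abs_mul_div_integral_sub_le (hz : 0 < ∫ θ, f θ * p θ ∂μ) :
    ∫ θ, |f θ * p θ / (∫ θ', f θ' * p θ' ∂μ) - p θ| ∂μ
      ≤ 2 / (∫ θ, f θ * p θ ∂μ) * ∫ θ, |f θ - 1| * p θ ∂μ := by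
  set z := ∫ θ, f θ * p θ ∂μ
  set I := ∫ θ, |f θ - 1| * p θ ∂μ
  have hI : Integrable (fun θ => |f θ - 1| * p θ) μ := by
    refine ((hfp.sub hp).abs).congr (Eventually.of_forall fun θ => ?_)
    simp only [Pi.sub_apply, ← sub_one_mul, abs_mul, abs_of_nonneg (hp0 θ)]
  have hpt : ∀ θ, |f θ * p θ / z - p θ| ≤ z⁻¹ * (|f θ - 1| * p θ) + z⁻¹ * |1 - z| * p θ := by
    intro θ
    have : f θ * p θ / z - p θ = z⁻¹ * ((f θ - 1) * p θ + (1 - z) * p θ) := by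
      field_simp
      ring
    rw [this, abs_mul, abs_inv, abs_of_pos hz, mul_assoc, ← mul_add]
    gcongr
    refine (abs_add_le _ _).trans_eq ?_
    rw [abs_mul, abs_mul, abs_of_nonneg (hp0 θ)]
  calc ∫ θ, |f θ * p θ / z - p θ| ∂μ
      ≤ ∫ θ, z⁻¹ * (|f θ - 1| * p θ) + z⁻¹ * |1 - z| * p θ ∂μ :=
        integral_mono (((hfp.div_const z).sub hp).abs)
          ((hI.const_mul _).add (hp.const_mul _)) hpt
    _ = z⁻¹ * I + z⁻¹ * |1 - z| := by
        rw [integral_add (hI.const_mul _) (hp.const_mul _), integral_const_mul,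
          integral_const_mul, hp1, mul_one]
    _ ≤ z⁻¹ * I + z⁻¹ * I := by
        gcongr
        exact abs_one_sub_integral_mul_le hp0 hp hp1 hfp
    _ = 2 / z * I := by ring

end Tilt

end

theorem stmt10_general {Θ : Type*} [MeasurableSpace Θ] (μ : Measure Θ)
    (p : ℕ → Θ → ℝ) (g : ℕ → Θ → ℝ)
    (hpnonneg : ∀ n θ, 0 ≤ p n θ)
    (hpdens : ∀ n, ∫ θ, p n θ ∂μ = 1) (hpint : ∀ n, Integrable (p n) μ)
    (hgmeas : ∀ n, Measurable (g n))
    (M : ℝ) (hgbd : ∀ n θ, |g n θ| ≤ M)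
    (A : ℝ → Set Θ) (hAmeas : ∀ ε > (0 : ℝ), MeasurableSet (A ε))
    (hconc : ∀ ε > (0 : ℝ),
      Tendsto (fun n => ∫ θ in (A ε)ᶜ, p n θ ∂μ) atTop (nhds 0))
    (hsmall : ∀ η > (0 : ℝ), ∃ ε > (0 : ℝ), ∃ N : ℕ, ∀ n ≥ N, ∀ θ ∈ A ε, |g n θ| ≤ η) :
    Tendsto (fun n => ∫ θ, |Real.exp (g n θ) - 1| * p n θ ∂μ) atTop (nhds 0) ∧
    (∀ n, Real.exp (-M) ≤ ∫ θ, Real.exp (g n θ) * p n θ ∂μ) ∧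
    Tendsto (fun n => ∫ θ,
        |Real.exp (g n θ) * p n θ / (∫ θ', Real.exp (g n θ') * p n θ' ∂μ) - p n θ| ∂μ)
      atTop (nhds 0) := by
  have hint : ∀ n, Integrable (fun θ => Real.exp (g n θ) * p n θ) μ := fun n =>
    (hpint n).bdd_mul (hgmeas n).exp.aestronglyMeasurable <| Eventually.of_forall fun θ => by
      rw [Real.norm_of_nonneg (Real.exp_pos _).le]
      exact Real.exp_le_exp.2 (le_of_abs_le (hgbd n θ))
  have hz : ∀ n, Real.exp (-M) ≤ ∫ θ, Real.exp (g n θ) * p n θ ∂μ := fun n =>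
    le_integral_mul_of_le (hpnonneg n) (hpint n) (hpdens n) (hint n)
      fun θ => Real.exp_le_exp.2 (neg_le_of_abs_le (hgbd n θ))
  have hI : Tendsto (fun n => ∫ θ, |Real.exp (g n θ) - 1| * p n θ ∂μ) atTop (nhds 0) := by
    refine tendsto_integral_mul_of_concentration (C := Real.exp M - 1) hAmeas hpnonneg hpint
      hpdens (fun n => ((hgmeas n).exp.sub_const 1).abs.aestronglyMeasurable)
      (fun n θ => abs_nonneg _) (fun n θ => ?_) hconc fun η hη => ?_
    · exact (abs_exp_sub_one_le_exp_abs_sub_one _).trans (by gcongr; exact hgbd n θ)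
    · obtain ⟨ε, hε, N, hN⟩ := hsmall (Real.log (1 + η)) (Real.log_pos (by linarith))
      exact ⟨ε, hε, N, fun n hn θ hθ => abs_exp_sub_one_le_of_abs_le_log hη (hN n hn θ hθ)⟩
  refine ⟨hI, hz, squeeze_zero (fun n => integral_nonneg fun θ => abs_nonneg _) (fun n => ?_)
    (by simpa using hI.const_mul (2 * Real.exp M))⟩
  have hz_pos := (Real.exp_pos (-M)).trans_le (hz n)
  have hz_inv : (∫ θ, Real.exp (g n θ) * p n θ ∂μ)⁻¹ ≤ Real.exp M :=
    inv_le_of_inv_le₀ (Real.exp_pos M) (by rw [← Real.exp_neg]; exact hz n)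
  calc _ ≤ _ := integral_abs_mul_div_integral_sub_le (hpnonneg n) (hpint n) (hpdens n) (hint n)
        hz_pos
    _ ≤ 2 * Real.exp M * ∫ θ, |Real.exp (g n θ) - 1| * p n θ ∂μ := by
        rw [div_eq_mul_inv]
        gcongr
        exact integral_nonneg fun θ => mul_nonneg (abs_nonneg _) (hpnonneg n θ)

/-- Analytic core of Lemma 1. If `p_n` are probability densities w.r.t. `μ`,
`g_n` are uniformly bounded measurable functions, the posterior mass escapes the
complements of concentration sets `A_ε`, and `g_n` is eventually uniformly small on some
`A_ε`, then `∫ |exp(g_n) − 1|·p_n dμ → 0`; consequently, with the normalizing constant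
`z_n = ∫ exp(g_n)·p_n dμ ≥ exp(−M) > 0`, the tilted density converges to the original in
total variation: `∫ |exp(g_n)·p_n/z_n − p_n| dμ → 0`. -/
theorem stmt10 {Θ : Type*} [MeasurableSpace Θ] (μ : Measure Θ)
    (p : ℕ → Θ → ℝ) (g : ℕ → Θ → ℝ)
    (hpmeas : ∀ n, Measurable (p n)) (hpnonneg : ∀ n θ, 0 ≤ p n θ)
    (hpdens : ∀ n, ∫ θ, p n θ ∂μ = 1) (hpint : ∀ n, Integrable (p n) μ)
    (hgmeas : ∀ n, Measurable (g n))
    (M : ℝ) (hgbd : ∀ n θ, |g n θ| ≤ M)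
    (A : ℝ → Set Θ) (hAmeas : ∀ ε > (0 : ℝ), MeasurableSet (A ε))
    (hconc : ∀ ε > (0 : ℝ),
      Tendsto (fun n => ∫ θ in (A ε)ᶜ, p n θ ∂μ) atTop (nhds 0))
    (hsmall : ∀ η > (0 : ℝ), ∃ ε > (0 : ℝ), ∃ N : ℕ, ∀ n ≥ N, ∀ θ ∈ A ε, |g n θ| ≤ η) :
    Tendsto (fun n => ∫ θ, |Real.exp (g n θ) - 1| * p n θ ∂μ) atTop (nhds 0) ∧
    (∀ n, Real.exp (-M) ≤ ∫ θ, Real.exp (g n θ) * p n θ ∂μ) ∧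
    Tendsto (fun n => ∫ θ,
        |Real.exp (g n θ) * p n θ / (∫ θ', Real.exp (g n θ') * p n θ' ∂μ) - p n θ| ∂μ)
      atTop (nhds 0) :=
  stmt10_general μ p g hpnonneg hpdens hpint hgmeas M hgbd A hAmeas hconc hsmall
end

section
/- Let A : Ω → {0,1}, X : Ω → 𝒳, and let Y₁, Y₀ : Ω → ℝ be integrable potential outcomes with observed outcome Y = A·Y₁ + (1−A)·Y₀. Let e(X) be a version of E[A | σ(X)] with δ ≤ e(X) ≤ 1−δ almost surely, δ ∈ (0, 1/2). For a ∈ {0,1}, let h_a^{(1)}, h_a^{(0)} : 𝒳 → ℝ be measurable and integrable with E[Y_a·A | σ(X)] = h_a^{(1)}(X)·e(X) and E[Y_a·(1−A) | σ(X)] = h_a^{(0)}(X)·(1 − e(X)) almost surely (versions of E[Y_a | A = 1, X] and E[Y_a | A = 0, X]), and set Δ_a(X) = h_a^{(1)}(X) − h_a^{(0)}(X). Then the observed regression contrast satisfies E[ h₁^{(1)}(X) − h₀^{(0)}(X) ] = E[Y₁ − Y₀] + E[ Δ₀(X)·e(X) + Δ₁(X)·(1 − e(X)) ]. In particular, if Δ₀(X)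 = Δ₁(X) = Δ almost surely for a constant Δ, then E[ h₁^{(1)}(X) − h₀^{(0)}(X) ] = E[Y₁ − Y₀] + Δ. -/
open MeasureTheory ProbabilityTheory

/-!
Writing `g_a = h_a^{(1)}(X) e(X) + h_a^{(0)}(X) (1 - e(X))`, the defining properties of the
`h`'s add up (since `A + (1 - A) = 1`) to `g_a = E[Y_a | X]`, so `E[g₁ - g₀] = E[Y₁ - Y₀]`.
Pointwise, `h₁^{(1)} - h₀^{(0)} = (g₁ - g₀) + Δ₀ e + Δ₁ (1 - e)`; integrating gives the
decomposition, and a constant `Δ` integrates to itself against a probability measure.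
-/

section ConditionalMean

variable {Ω : Type*} {m m₀ : MeasurableSpace Ω} {μ : Measure Ω}

theorem integral_eq_of_ae_eq_condExp {f g : Ω → ℝ} (hm : m ≤ m₀) [SigmaFinite (μ.trim hm)]
    (hf : f =ᵐ[μ] μ[g | m]) : ∫ ω, f ω ∂μ = ∫ ω, g ω ∂μ :=
  (integral_congr_ae hf).trans (integral_condExp hm)

theorem MeasureTheory.Integrable.mul_of_forall_eq_zero_or_one {Y A : Ω → ℝ} (hY : Integrable Y μ)
    (hA : Measurable A) (hA01 : ∀ ω, A ω = 0 ∨ A ω = 1) :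
    Integrable (fun ω => Y ω * A ω) μ :=
  hY.mul_bdd hA.aestronglyMeasurable (c := 1) <| .of_forall fun ω => by
    rcases hA01 ω with h | h <;> simp [h]

theorem condExp_mul_add_condExp_mul_one_sub {Y A : Ω → ℝ} (hY : Integrable Y μ)
    (hYA : Integrable (fun ω => Y ω * A ω) μ) :
    μ[fun ω => Y ω * A ω | m] + μ[fun ω => Y ω * (1 - A ω) | m] =ᵐ[μ] μ[Y | m] := by
  have hsplit : (fun ω => Y ω * A ω) + (fun ω => Y ω * (1 - A ω)) = Y := by
    funext ω; simp only [Pi.add_apply]; ring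
  have hYA' : Integrable (fun ω => Y ω * (1 - A ω)) μ :=
    (hY.sub hYA).congr (.of_forall fun ω => by simp only [Pi.sub_apply]; ring)
  exact (condExp_add hYA hYA' m).symm.trans (.of_eq (by rw [hsplit]))

end ConditionalMean

theorem stmt12_general {Ω 𝓧 : Type*} [MeasurableSpace Ω] [MeasurableSpace 𝓧]
    (P : Measure Ω) [IsProbabilityMeasure P]
    (A : Ω → ℝ) (X : Ω → 𝓧) (Y₁ Y₀ : Ω → ℝ)
    (hA : Measurable A) (hA01 : ∀ ω, A ω = 0 ∨ A ω = 1) (hX : Measurable X)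
    (hY₁ : Integrable Y₁ P) (hY₀ : Integrable Y₀ P)
    (e : 𝓧 → ℝ)
    (h11 h10 h01 h00 : 𝓧 → ℝ)
    (hint : Integrable (fun ω => h11 (X ω)) P ∧ Integrable (fun ω => h10 (X ω)) P ∧
      Integrable (fun ω => h01 (X ω)) P ∧ Integrable (fun ω => h00 (X ω)) P)
    (h11ver : (fun ω => h11 (X ω) * e (X ω))
      =ᵐ[P] P[fun ω => Y₁ ω * A ω | MeasurableSpace.comap X inferInstance])
    (h10ver : (fun ω => h10 (X ω) * (1 - e (X ω)))
      =ᵐ[P] P[fun ω => Y₁ ω * (1 - A ω) | MeasurableSpace.comap X inferInstance])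
    (h01ver : (fun ω => h01 (X ω) * e (X ω))
      =ᵐ[P] P[fun ω => Y₀ ω * A ω | MeasurableSpace.comap X inferInstance])
    (h00ver : (fun ω => h00 (X ω) * (1 - e (X ω)))
      =ᵐ[P] P[fun ω => Y₀ ω * (1 - A ω) | MeasurableSpace.comap X inferInstance]) :
    (∫ ω, (h11 (X ω) - h00 (X ω)) ∂P
      = ∫ ω, (Y₁ ω - Y₀ ω) ∂P
        + ∫ ω, ((h01 (X ω) - h00 (X ω)) * e (X ω)
            + (h11 (X ω) - h10 (X ω)) * (1 - e (X ω))) ∂P) ∧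
    (∀ Δ : ℝ,
      (∀ᵐ ω ∂P, h01 (X ω) - h00 (X ω) = Δ ∧ h11 (X ω) - h10 (X ω) = Δ) →
      ∫ ω, (h11 (X ω) - h00 (X ω)) ∂P = (∫ ω, (Y₁ ω - Y₀ ω) ∂P) + Δ) := by
  set g₁ := (fun ω => h11 (X ω) * e (X ω)) + fun ω => h10 (X ω) * (1 - e (X ω))
  set g₀ := (fun ω => h01 (X ω) * e (X ω)) + fun ω => h00 (X ω) * (1 - e (X ω))
  have hcond₁ : g₁ =ᵐ[P] P[Y₁ | MeasurableSpace.comap X inferInstance] :=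
    (h11ver.add h10ver).trans <| condExp_mul_add_condExp_mul_one_sub hY₁
      (hY₁.mul_of_forall_eq_zero_or_one hA hA01)
  have hcond₀ : g₀ =ᵐ[P] P[Y₀ | MeasurableSpace.comap X inferInstance] :=
    (h01ver.add h00ver).trans <| condExp_mul_add_condExp_mul_one_sub hY₀
      (hY₀.mul_of_forall_eq_zero_or_one hA hA01)
  have hcontrast : g₁ - g₀ =ᵐ[P] P[Y₁ - Y₀ | MeasurableSpace.comap X inferInstance] :=
    (hcond₁.sub hcond₀).trans (condExp_sub hY₁ hY₀ _).symm
  set ξ := fun ω => (h01 (X ω) - h00 (X ω)) * e (X ω)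
      + (h11 (X ω) - h10 (X ω)) * (1 - e (X ω))
  have hcontrast_int : Integrable (g₁ - g₀) P := integrable_condExp.congr hcontrast.symm
  have hbias : ξ = (fun ω => h11 (X ω) - h00 (X ω)) - (g₁ - g₀) := by
    funext ω; simp only [ξ, g₁, g₀, Pi.sub_apply, Pi.add_apply]; ring
  have hdecomp : ∫ ω, (h11 (X ω) - h00 (X ω)) ∂P = ∫ ω, (Y₁ ω - Y₀ ω) ∂P + ∫ ω, ξ ω ∂P := by
    calc ∫ ω, (h11 (X ω) - h00 (X ω)) ∂P = ∫ ω, ((g₁ - g₀) ω + ξ ω) ∂P := by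
          simp only [hbias, Pi.sub_apply, add_sub_cancel]
      _ = ∫ ω, (Y₁ ω - Y₀ ω) ∂P + ∫ ω, ξ ω ∂P := by
          rw [integral_add hcontrast_int (hbias ▸ (hint.1.sub hint.2.2.2).sub hcontrast_int),
            integral_eq_of_ae_eq_condExp hX.comap_le hcontrast]
          rfl
  refine ⟨hdecomp, fun Δ hΔ => ?_⟩
  have hξ : ξ =ᵐ[P] fun _ => Δ := hΔ.mono fun ω hω => by simp only [ξ, hω.1, hω.2]; ring
  rw [hdecomp, integral_congr_ae hξ, integral_const, probReal_univ, one_smul]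

/-- Sensitivity-analysis decomposition without ignorability. With
`h_a^{(1)}(X), h_a^{(0)}(X)` versions of `E[Y_a | A = 1, X]` and `E[Y_a | A = 0, X]`
(characterized by `E[Y_a·A | σ(X)] = h_a^{(1)}(X)·e(X)` and
`E[Y_a·(1−A) | σ(X)] = h_a^{(0)}(X)·(1−e(X))` a.s.) and `Δ_a = h_a^{(1)} − h_a^{(0)}`,
the observed regression contrast satisfies
`E[h₁^{(1)}(X) − h₀^{(0)}(X)] = E[Y₁ − Y₀] + E[Δ₀(X)·e(X) + Δ₁(X)·(1−e(X))]`;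
in particular, if `Δ₀(X) = Δ₁(X) = Δ` a.s. for a constant `Δ`, then
`E[h₁^{(1)}(X) − h₀^{(0)}(X)] = E[Y₁ − Y₀] + Δ`. -/
theorem stmt12 {Ω 𝓧 : Type*} [MeasurableSpace Ω] [MeasurableSpace 𝓧]
    (P : Measure Ω) [IsProbabilityMeasure P]
    (A : Ω → ℝ) (X : Ω → 𝓧) (Y₁ Y₀ Y : Ω → ℝ)
    (hA : Measurable A) (hA01 : ∀ ω, A ω = 0 ∨ A ω = 1) (hX : Measurable X)
    (hY₁ : Integrable Y₁ P) (hY₀ : Integrable Y₀ P)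
    (hYmeas : Measurable Y₁ ∧ Measurable Y₀)
    (hY : ∀ ω, Y ω = A ω * Y₁ ω + (1 - A ω) * Y₀ ω)
    (e : 𝓧 → ℝ) (he : Measurable e)
    (hver : (fun ω => e (X ω)) =ᵐ[P] P[A | MeasurableSpace.comap X inferInstance])
    (δ : ℝ) (hδ : δ ∈ Set.Ioo (0 : ℝ) (1 / 2))
    (hpos : ∀ᵐ ω ∂P, e (X ω) ∈ Set.Icc δ (1 - δ))
    (h11 h10 h01 h00 : 𝓧 → ℝ)
    (hmeas : Measurable h11 ∧ Measurable h10 ∧ Measurable h01 ∧ Measurable h00)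
    (hint : Integrable (fun ω => h11 (X ω)) P ∧ Integrable (fun ω => h10 (X ω)) P ∧
      Integrable (fun ω => h01 (X ω)) P ∧ Integrable (fun ω => h00 (X ω)) P)
    (h11ver : (fun ω => h11 (X ω) * e (X ω))
      =ᵐ[P] P[fun ω => Y₁ ω * A ω | MeasurableSpace.comap X inferInstance])
    (h10ver : (fun ω => h10 (X ω) * (1 - e (X ω)))
      =ᵐ[P] P[fun ω => Y₁ ω * (1 - A ω) | MeasurableSpace.comap X inferInstance])
    (h01ver : (fun ω => h01 (X ω) * e (X ω))
      =ᵐ[P] P[fun ω => Y₀ ω * A ω | MeasurableSpace.comap X inferInstance])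
    (h00ver : (fun ω => h00 (X ω) * (1 - e (X ω)))
      =ᵐ[P] P[fun ω => Y₀ ω * (1 - A ω) | MeasurableSpace.comap X inferInstance]) :
    (∫ ω, (h11 (X ω) - h00 (X ω)) ∂P
      = ∫ ω, (Y₁ ω - Y₀ ω) ∂P
        + ∫ ω, ((h01 (X ω) - h00 (X ω)) * e (X ω)
            + (h11 (X ω) - h10 (X ω)) * (1 - e (X ω))) ∂P) ∧
    (∀ Δ : ℝ,
      (∀ᵐ ω ∂P, h01 (X ω) - h00 (X ω) = Δ ∧ h11 (X ω) - h10 (X ω) = Δ) →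
      ∫ ω, (h11 (X ω) - h00 (X ω)) ∂P = (∫ ω, (Y₁ ω - Y₀ ω) ∂P) + Δ) :=
  stmt12_general P A X Y₁ Y₀ hA hA01 hX hY₁ hY₀ e h11 h10 h01 h00 hint h11ver h10ver h01ver h00ver
end

section
/- Let Θ be a compact metric space, Π a Borel probability measure on Θ, f : Θ → ℝ continuous, and f_n : Θ → ℝ measurable functions converging to f uniformly on Θ. Let f* = inf_{θ∈Θ} f(θ) and, for ε > 0, set A_ε = {θ ∈ Θ : f(θ) < f* + ε}. Assume Π(A_ε) > 0 for every ε > 0. Then for every ε > 0, the generalized posterior mass of A_ε tends to one: ( ∫_{A_ε} exp(−n·f_n(θ)) Π(dθ) ) / ( ∫_{Θ} exp(−n·f_n(θ)) Π(dθ) ) → 1 as n → ∞. -/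
/-!
Eventually `f_n` is within `c = ε/8` of `f` everywhere, so on `A_{ε/2}` the weight
`exp(-n f_n)` is at least `exp(-n (f* + ε/2 + c))`, while off `A_ε` it is at most
`exp(-n (f* + ε - c))`. Hence the posterior mass of the complement of `A_ε` is at most
`exp(-n ε/4) · Π(A_εᶜ) / Π(A_{ε/2})`, which tends to zero because `Π(A_{ε/2}) > 0`.
-/

open MeasureTheory Filter Topology

namespace GibbsPosterior

variable {Θ : Type*} [MeasurableSpace Θ] {μ : Measure Θ}

/-- Mass of `s` under the general posterior with density proportional to `exp(-n φ)` w.r.t. `μ`. -/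
noncomputable def mass (μ : Measure Θ) (n : ℕ) (φ : Θ → ℝ) (s : Set Θ) : ℝ :=
  (∫ θ in s, Real.exp (-(n : ℝ) * φ θ) ∂μ) / ∫ θ, Real.exp (-(n : ℝ) * φ θ) ∂μ

lemma mass_nonneg (n : ℕ) (φ : Θ → ℝ) (s : Set Θ) : 0 ≤ mass μ n φ s :=
  div_nonneg (integral_nonneg fun _ => (Real.exp_pos _).le)
    (integral_nonneg fun _ => (Real.exp_pos _).le)

lemma mass_add_mass_compl [NeZero μ] {n : ℕ} {φ : Θ → ℝ} {s : Set Θ} (hs : MeasurableSet s)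
    (hint : Integrable (fun θ => Real.exp (-(n : ℝ) * φ θ)) μ) :
    mass μ n φ s + mass μ n φ sᶜ = 1 := by
  rw [mass, mass, ← add_div, integral_add_compl hs hint, div_self (integral_exp_pos hint).ne']

lemma integrable_exp_neg_mul [IsFiniteMeasure μ] {n : ℕ} {φ : Θ → ℝ} (hφ : Measurable φ)
    {m : ℝ} (hm : ∀ θ, m ≤ φ θ) : Integrable (fun θ => Real.exp (-(n : ℝ) * φ θ)) μ := by
  refine (integrable_const (Real.exp (-(n : ℝ) * m))).mono'
    (Real.measurable_exp.comp (hφ.const_mul _)).aestronglyMeasurable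
    (ae_of_all _ fun θ => ?_)
  rw [Real.norm_of_nonneg (Real.exp_pos _).le, Real.exp_le_exp]
  nlinarith [hm θ, (n.cast_nonneg : (0 : ℝ) ≤ n)]

lemma mass_le_exp_neg_mul [IsFiniteMeasure μ] {n : ℕ} {φ : Θ → ℝ}
    (hint : Integrable (fun θ => Real.exp (-(n : ℝ) * φ θ)) μ)
    {t u : Set Θ} (ht : MeasurableSet t) (hμt : 0 < μ.real t) {a b : ℝ}
    (hta : ∀ θ ∈ t, φ θ ≤ a) (hub : ∀ θ ∈ u, b ≤ φ θ) :
    mass μ n φ u ≤ Real.exp (-(n : ℝ) * (b - a)) * (μ.real u / μ.real t) := by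
  have hn : (0 : ℝ) ≤ n := n.cast_nonneg
  have hnum : ∫ θ in u, Real.exp (-(n : ℝ) * φ θ) ∂μ ≤ Real.exp (-(n : ℝ) * b) * μ.real u := by
    refine (Real.le_norm_self _).trans (norm_setIntegral_le_of_norm_le_const (measure_lt_top μ u)
      fun θ hθ => ?_)
    rw [Real.norm_of_nonneg (Real.exp_pos _).le, Real.exp_le_exp]
    nlinarith [hub θ hθ]
  have hden : Real.exp (-(n : ℝ) * a) * μ.real t ≤ ∫ θ, Real.exp (-(n : ℝ) * φ θ) ∂μ := by
    refine (setIntegral_ge_of_const_le_real ht (measure_ne_top μ t) (fun θ hθ => ?_)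
      hint.integrableOn).trans
      (setIntegral_le_integral hint (ae_of_all _ fun _ => (Real.exp_pos _).le))
    rw [Real.exp_le_exp]
    nlinarith [hta θ hθ]
  calc mass μ n φ u
      ≤ Real.exp (-(n : ℝ) * b) * μ.real u / (Real.exp (-(n : ℝ) * a) * μ.real t) :=
        div_le_div₀ (by positivity) hnum (by positivity) hden
    _ = Real.exp (-(n : ℝ) * (b - a)) * (μ.real u / μ.real t) := by
        rw [mul_div_mul_comm, ← Real.exp_sub]
        ring_nf

lemma tendsto_exp_neg_natCast_mul {δ : ℝ} (hδ : 0 < δ) :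
    Tendsto (fun n : ℕ => Real.exp (-(n : ℝ) * δ)) atTop (𝓝 0) := by
  simp_rw [neg_mul]
  exact Real.tendsto_exp_neg_atTop_nhds_zero.comp
    (tendsto_natCast_atTop_atTop.atTop_mul_const hδ)

theorem tendsto_mass_one [IsFiniteMeasure μ] {φ : ℕ → Θ → ℝ} (hφ : ∀ n, Measurable (φ n))
    {s t : Set Θ} (hs : MeasurableSet s) (ht : MeasurableSet t) (hμt : μ t ≠ 0)
    {m a b : ℝ} (hab : a < b)
    (hbounds : ∀ᶠ n : ℕ in atTop, ∀ θ, m ≤ φ n θ ∧ (θ ∈ t → φ n θ ≤ a) ∧ (θ ∉ s → b ≤ φ n θ)) :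
    Tendsto (fun n => mass μ n (φ n) s) atTop (𝓝 1) := by
  have hμt' : 0 < μ.real t := ENNReal.toReal_pos hμt (measure_ne_top μ t)
  have hint : ∀ᶠ n : ℕ in atTop, Integrable (fun θ => Real.exp (-(n : ℝ) * φ n θ)) μ :=
    hbounds.mono fun n h => integrable_exp_neg_mul (hφ n) fun θ => (h θ).1
  have hcompl : Tendsto (fun n => mass μ n (φ n) sᶜ) atTop (𝓝 0) := by
    refine squeeze_zero' (Eventually.of_forall fun n => mass_nonneg _ _ _)
      ((hbounds.and hint).mono fun n ⟨h, hn⟩ =>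
        mass_le_exp_neg_mul hn ht hμt' (fun θ hθ => (h θ).2.1 hθ) fun θ hθ => (h θ).2.2 hθ) ?_
    simpa using (tendsto_exp_neg_natCast_mul (sub_pos.2 hab)).mul_const
      (μ.real sᶜ / μ.real t)
  have : NeZero μ := ⟨fun h => hμt (by simp [h])⟩
  have hsum : ∀ᶠ n : ℕ in atTop, 1 - mass μ n (φ n) sᶜ = mass μ n (φ n) s :=
    hint.mono fun n hn => (eq_sub_of_add_eq (mass_add_mass_compl hs hn)).symm
  simpa using (tendsto_const_nhds.sub hcompl).congr' hsum

end GibbsPosterior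

/-- Posterior concentration for general posteriors (Proposition 1 / Miller
2021). On a compact metric space `Θ` with prior `Π`, if the measurable functions `f_n`
converge uniformly to a continuous `f` with infimum `f*`, and every set
`A_ε = {θ : f(θ) < f* + ε}` has positive prior mass, then for every `ε > 0` the general
posterior mass of `A_ε` tends to one:
`(∫_{A_ε} exp(−n·f_n) dΠ)/(∫_Θ exp(−n·f_n) dΠ) → 1`. -/
theorem stmt15 {Θ : Type*} [MetricSpace Θ] [CompactSpace Θ]
    [MeasurableSpace Θ] [BorelSpace Θ]
    (Pi : Measure Θ) [IsProbabilityMeasure Pi]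
    (f : Θ → ℝ) (hf : Continuous f)
    (fn : ℕ → Θ → ℝ) (hfnmeas : ∀ n, Measurable (fn n))
    (hunif : TendstoUniformly fn f atTop)
    (fstar : ℝ) (hfstar : fstar = ⨅ θ, f θ)
    (A : ℝ → Set Θ) (hA : ∀ ε : ℝ, A ε = {θ | f θ < fstar + ε})
    (hprior : ∀ ε > (0 : ℝ), 0 < Pi (A ε)) :
    ∀ ε > (0 : ℝ),
      Tendsto (fun n : ℕ =>
          (∫ θ in A ε, Real.exp (-(n : ℝ) * fn n θ) ∂Pi)
            / (∫ θ, Real.exp (-(n : ℝ) * fn n θ) ∂Pi))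
        atTop (nhds 1) := by
  intro ε hε
  have hlb : ∀ θ, fstar ≤ f θ := fun θ => hfstar ▸ ciInf_le (isCompact_range hf).bddBelow θ
  have hmeasA : ∀ δ, MeasurableSet (A δ) := fun δ =>
    hA δ ▸ (isOpen_lt hf continuous_const).measurableSet
  have hclose := Metric.tendstoUniformly_iff.mp hunif (ε / 8) (by positivity)
  refine GibbsPosterior.tendsto_mass_one hfnmeas (hmeasA ε) (hmeasA (ε / 2))
    (hprior (ε / 2) (by positivity)).ne' (m := fstar - ε / 8) (a := fstar + ε / 2 + ε / 8)
    (b := fstar + ε - ε / 8) (by linarith) (hclose.mono fun n hn θ => ?_)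
  have hθ := abs_lt.mp (Real.dist_eq _ _ ▸ hn θ)
  simp only [hA, Set.mem_ofPred_eq, not_lt]
  refine ⟨by linarith [hlb θ], fun h => by linarith, fun h => by linarith⟩
end

section
/- Let Θ_α ⊆ ℝ^p and Θ_β ⊆ ℝ^q be measurable sets, α* ∈ Θ_α, β⁰ ∈ Θ_β, and let μ_α, μ_β be σ-finite measures on Θ_α, Θ_β. For each n, let p_n^α and p_n^β be probability densities with respect to μ_α and μ_β, and let B_n : Θ_α × Θ_β → ℝ be measurable. Fix λ ∈ ℝ. Assume: (i) concentration: for every δ > 0, ∫_{‖α−α*‖ ≥ δ} p_n^α dμ_α → 0 and ∫_{‖β−β⁰‖ ≥ δ} p_n^β dμ_β → 0 as n → ∞; (ii) uniform boundedness: there is M < ∞ with |B_n(α,β)| ≤ M for all n, α, β; (iii) uniform Lipschitz continuity: there is L < ∞ with |B_n(α,β) − B_n(α′,β′)| ≤ L·(‖α−α′‖ + ‖β−β′‖) for all n and all points of Θ_α × Θ_β; and (iv) B_n(α*, β⁰) → 0 as n → ∞. Then, with z_n = ∬ exp(λ·B_n(α,β))·p_n^α(α)·p_n^β(β) dμ_α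 dμ_β (which satisfies z_n ≥ exp(−|λ|M) > 0), the entropically tilted posterior converges to the original posterior in total variation: ∬ | exp(λ·B_n(α,β))·p_n^α(α)·p_n^β(β)/z_n − p_n^α(α)·p_n^β(β) | dμ_α dμ_β → 0 as n → ∞. -/
/-!
Write `w = exp (λ B_n)`, `p = p_n^α p_n^β` and `z_n = ∫ w p`. The tilted density differs from `p`
by `(w - z_n) p / z_n`, and both `∫ |w - 1| p` and `|1 - z_n|` are at most
`e^{|λ| M} |λ| ∫ |B_n| p`, while `z_n ≥ e^{-|λ| M}`; so the total variation distance is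
`O(∫ |B_n| p)`. That integral tends to zero: near `(α*, β⁰)` the equi-Lipschitz `B_n` are
uniformly close to `B_n(α*, β⁰) → 0`, and away from it `|B_n| ≤ M` meets a vanishing posterior mass.
-/

open MeasureTheory Filter Topology Real

theorem Real.abs_exp_sub_one_le_abs_mul_exp_abs (t : ℝ) : |exp t - 1| ≤ |t| * exp |t| := by
  have hlow : t ≤ exp t - 1 := by linarith [add_one_le_exp t]
  have hup : exp t - 1 ≤ t * exp t := by
    have := mul_le_mul_of_nonneg_right (one_sub_le_exp_neg t) (exp_pos t).le
    rw [← exp_add, neg_add_cancel, exp_zero] at this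
    linarith
  have hmono : exp t ≤ exp |t| := exp_le_exp.2 (le_abs_self t)
  have hone : 1 ≤ exp |t| := one_le_exp (abs_nonneg t)
  rw [abs_le]
  constructor <;> nlinarith [abs_nonneg t, neg_abs_le t, le_abs_self t, exp_pos t]

theorem lipschitzWith_uncurry_of_abs_sub_le {X Y : Type*} [PseudoMetricSpace X]
    [PseudoMetricSpace Y] {f : X → Y → ℝ} {L : ℝ}
    (h : ∀ a a' b b', |f a b - f a' b'| ≤ L * (dist a a' + dist b b')) :
    LipschitzWith (2 * L.toNNReal) (fun z : X × Y => f z.1 z.2) := by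
  refine LipschitzWith.of_dist_le_mul fun z z' => ?_
  rw [Real.dist_eq, Prod.dist_eq]
  push_cast
  rw [Real.coe_toNNReal']
  have h1 := le_max_left (dist z.1 z'.1) (dist z.2 z'.2)
  have h2 := le_max_right (dist z.1 z'.1) (dist z.2 z'.2)
  calc |f z.1 z.2 - f z'.1 z'.2| ≤ L * (dist z.1 z'.1 + dist z.2 z'.2) := h _ _ _ _
    _ ≤ max L 0 * (dist z.1 z'.1 + dist z.2 z'.2) := by gcongr; exact le_max_left L 0
    _ ≤ 2 * max L 0 * max (dist z.1 z'.1) (dist z.2 z'.2) := by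
      nlinarith [le_max_right L 0]

structure IsProbabilityDensity {X : Type*} [MeasurableSpace X] (μ : Measure X) (p : X → ℝ) :
    Prop where
  nonneg : 0 ≤ p
  integrable : Integrable p μ
  integral_eq_one : ∫ x, p x ∂μ = 1

namespace IsProbabilityDensity

variable {X : Type*} [MeasurableSpace X] {μ : Measure X} {p : X → ℝ}

theorem prod {Y : Type*} [MeasurableSpace Y] {ν : Measure Y} [SFinite μ] [SFinite ν]
    {q : Y → ℝ} (hp : IsProbabilityDensity μ p) (hq : IsProbabilityDensity ν q) :
    IsProbabilityDensity (μ.prod ν) (fun z => p z.1 * q z.2) where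
  nonneg z := mul_nonneg (hp.nonneg z.1) (hq.nonneg z.2)
  integrable := hp.integrable.mul_prod hq.integrable
  integral_eq_one := by rw [integral_prod_mul, hp.integral_eq_one, hq.integral_eq_one, one_mul]

theorem integral_abs_reweight_sub_le (hp : IsProbabilityDensity μ p) {w : X → ℝ}
    (hwp : Integrable (fun x => w x * p x) μ) (hz : 0 < ∫ x, w x * p x ∂μ) :
    ∫ x, |w x * p x / (∫ y, w y * p y ∂μ) - p x| ∂μ
      ≤ 2 * (∫ x, w x * p x ∂μ)⁻¹ * ∫ x, |w x - 1| * p x ∂μ := by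
  set z := ∫ x, w x * p x ∂μ
  have habs : ∀ x, |w x - 1| * p x = |w x * p x - p x| := fun x => by
    rw [← sub_one_mul, abs_mul, abs_of_nonneg (hp.nonneg x)]
  have hdev : Integrable (fun x => |w x - 1| * p x) μ := by
    simpa only [habs, Pi.sub_apply] using (hwp.sub hp.integrable).abs
  have hmass : |1 - z| ≤ ∫ x, |w x - 1| * p x ∂μ := by
    have h1z : 1 - z = ∫ x, (p x - w x * p x) ∂μ := by
      rw [integral_sub hp.integrable hwp, hp.integral_eq_one]
    rw [h1z]
    refine abs_integral_le_integral_abs.trans_eq (integral_congr_ae ?_)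
    filter_upwards with x
    rw [habs, abs_sub_comm]
  have hpoint : ∀ x, |w x * p x / z - p x| ≤ z⁻¹ * (|w x - 1| * p x + |1 - z| * p x) := by
    intro x
    rw [show w x * p x / z - p x = z⁻¹ * ((w x - z) * p x) by field_simp, abs_mul, abs_mul,
      abs_of_pos (inv_pos.2 hz), abs_of_nonneg (hp.nonneg x), ← add_mul]
    gcongr
    · exact hp.nonneg x
    · exact abs_sub_le _ _ _
  calc ∫ x, |w x * p x / z - p x| ∂μ
      ≤ ∫ x, z⁻¹ * (|w x - 1| * p x + |1 - z| * p x) ∂μ :=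
        integral_mono ((hwp.div_const z).sub hp.integrable).abs
          ((hdev.add (hp.integrable.const_mul _)).const_mul _) hpoint
    _ = z⁻¹ * (∫ x, |w x - 1| * p x ∂μ + |1 - z|) := by
        rw [integral_const_mul, integral_add hdev (hp.integrable.const_mul _),
          integral_const_mul, hp.integral_eq_one, mul_one]
    _ ≤ 2 * z⁻¹ * ∫ x, |w x - 1| * p x ∂μ := by
        rw [mul_comm 2, mul_assoc, two_mul]
        gcongr

variable {g : X → ℝ} {K : ℝ}

theorem integrable_exp_mul (hp : IsProbabilityDensity μ p) (hg : AEStronglyMeasurable g μ)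
    (hgK : ∀ x, |g x| ≤ K) : Integrable (fun x => exp (g x) * p x) μ := by
  refine (hp.integrable.const_mul (exp K)).mono'
    ((continuous_exp.comp_aestronglyMeasurable hg).mul hp.integrable.aestronglyMeasurable)
    (ae_of_all _ fun x => ?_)
  rw [Real.norm_eq_abs, abs_of_nonneg (mul_nonneg (exp_pos _).le (hp.nonneg x))]
  gcongr
  · exact hp.nonneg x
  · exact (le_abs_self _).trans (hgK x)

theorem exp_neg_le_integral_exp_mul (hp : IsProbabilityDensity μ p)
    (hg : AEStronglyMeasurable g μ) (hgK : ∀ x, |g x| ≤ K) :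
    exp (-K) ≤ ∫ x, exp (g x) * p x ∂μ :=
  calc exp (-K) = ∫ x, exp (-K) * p x ∂μ := by
        rw [integral_const_mul, hp.integral_eq_one, mul_one]
    _ ≤ ∫ x, exp (g x) * p x ∂μ :=
        integral_mono (hp.integrable.const_mul _) (hp.integrable_exp_mul hg hgK) fun x => by
          gcongr
          · exact hp.nonneg x
          · exact (abs_le.1 (hgK x)).1

theorem integral_abs_tilt_sub_le (hp : IsProbabilityDensity μ p)
    (hg : AEStronglyMeasurable g μ) (hgK : ∀ x, |g x| ≤ K) :
    ∫ x, |exp (g x) * p x / (∫ y, exp (g y) * p y ∂μ) - p x| ∂μ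
      ≤ 2 * exp K * exp K * ∫ x, |g x| * p x ∂μ := by
  have hz := hp.exp_neg_le_integral_exp_mul hg hgK
  have hzinv : (∫ x, exp (g x) * p x ∂μ)⁻¹ ≤ exp K := by
    simpa only [exp_neg, inv_inv] using inv_anti₀ (exp_pos _) hz
  have hgp : Integrable (fun x => |g x| * p x) μ := by
    refine (hp.integrable.const_mul K).mono' (hg.norm.mul hp.integrable.aestronglyMeasurable)
      (ae_of_all _ fun x => ?_)
    rw [Real.norm_eq_abs, abs_of_nonneg (mul_nonneg (abs_nonneg _) (hp.nonneg x))]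
    exact mul_le_mul_of_nonneg_right (hgK x) (hp.nonneg x)
  have hdev : ∫ x, |exp (g x) - 1| * p x ∂μ ≤ exp K * ∫ x, |g x| * p x ∂μ := by
    rw [← integral_const_mul]
    refine integral_mono_of_nonneg (ae_of_all _ fun x => mul_nonneg (abs_nonneg _) (hp.nonneg x))
      (hgp.const_mul _) (ae_of_all _ fun x => ?_)
    calc |exp (g x) - 1| * p x ≤ (|g x| * exp |g x|) * p x := by
          gcongr
          · exact hp.nonneg x
          · exact abs_exp_sub_one_le_abs_mul_exp_abs _
      _ ≤ (|g x| * exp K) * p x := by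
          gcongr
          · exact hp.nonneg x
          · exact hgK x
      _ = exp K * (|g x| * p x) := by ring
  calc ∫ x, |exp (g x) * p x / (∫ y, exp (g y) * p y ∂μ) - p x| ∂μ
      ≤ 2 * (∫ x, exp (g x) * p x ∂μ)⁻¹ * ∫ x, |exp (g x) - 1| * p x ∂μ :=
        hp.integral_abs_reweight_sub_le (hp.integrable_exp_mul hg hgK)
          ((exp_pos _).trans_le hz)
    _ ≤ 2 * exp K * (exp K * ∫ x, |g x| * p x ∂μ) := by
        gcongr
        exact integral_nonneg fun x => mul_nonneg (abs_nonneg _) (hp.nonneg x)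
    _ = 2 * exp K * exp K * ∫ x, |g x| * p x ∂μ := by ring

end IsProbabilityDensity

section Concentration

variable {ι X Y : Type*} [PseudoMetricSpace X] [MeasurableSpace X]
  [PseudoMetricSpace Y] [MeasurableSpace Y] {l : Filter ι}

def ConcentratesAt (μ : Measure X) (l : Filter ι) (p : ι → X → ℝ) (x₀ : X) : Prop :=
  ∀ δ > 0, Tendsto (fun i => ∫ x in {x | δ ≤ dist x x₀}, p i x ∂μ) l (𝓝 0)

theorem ConcentratesAt.prod {μ : Measure X} {ν : Measure Y} [SFinite μ] [SFinite ν]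
    {p : ι → X → ℝ} {q : ι → Y → ℝ} {x₀ : X} {y₀ : Y}
    (hp : ∀ i, IsProbabilityDensity μ (p i)) (hq : ∀ i, IsProbabilityDensity ν (q i))
    (hpc : ConcentratesAt μ l p x₀) (hqc : ConcentratesAt ν l q y₀) :
    ConcentratesAt (μ.prod ν) l (fun i z => p i z.1 * q i z.2) (x₀, y₀) := by
  intro δ hδ
  set Sα := {x | δ ≤ dist x x₀}
  set Sβ := {y | δ ≤ dist y y₀}
  have hset : {z : X × Y | δ ≤ dist z (x₀, y₀)} = Sα ×ˢ Set.univ ∪ Set.univ ×ˢ Sβ := by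
    ext z
    simp [Sα, Sβ, Prod.dist_eq]
  have hbound : ∀ i, ∫ z in {z : X × Y | δ ≤ dist z (x₀, y₀)}, p i z.1 * q i z.2 ∂μ.prod ν
      ≤ (∫ x in Sα, p i x ∂μ) + ∫ y in Sβ, q i y ∂ν := by
    intro i
    have hpq := ((hp i).prod (hq i)).integrable
    rw [hset]
    calc _ ≤ ∫ z, p i z.1 * q i z.2
            ∂((μ.prod ν).restrict (Sα ×ˢ Set.univ) + (μ.prod ν).restrict (Set.univ ×ˢ Sβ)) :=
          integral_mono_measure (Measure.restrict_union_le _ _)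
            (ae_of_all _ ((hp i).prod (hq i)).nonneg)
            (Integrable.add_measure hpq.integrableOn hpq.integrableOn)
      _ = _ := by
          rw [integral_add_measure hpq.integrableOn hpq.integrableOn, setIntegral_prod_mul,
            setIntegral_prod_mul, setIntegral_univ, setIntegral_univ, (hp i).integral_eq_one,
            (hq i).integral_eq_one, mul_one, one_mul]
  refine squeeze_zero (fun i => integral_nonneg ((hp i).prod (hq i)).nonneg) hbound ?_
  simpa using (hpc δ hδ).add (hqc δ hδ)

theorem ConcentratesAt.tendsto_integral_abs_mul [OpensMeasurableSpace X] {μ : Measure X}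
    {p : ι → X → ℝ} {x₀ : X} (hp : ∀ i, IsProbabilityDensity μ (p i))
    (hpc : ConcentratesAt μ l p x₀) {f : ι → X → ℝ} {M : ℝ}
    (hfM : ∀ i x, |f i x| ≤ M)
    (hfc : EquicontinuousAt f x₀) (hf₀ : Tendsto (fun i => f i x₀) l (𝓝 0)) :
    Tendsto (fun i => ∫ x, |f i x| * p i x ∂μ) l (𝓝 0) := by
  refine tendsto_order.2 ⟨fun a ha => Eventually.of_forall fun i =>
    ha.trans_le (integral_nonneg fun x => mul_nonneg (abs_nonneg _) ((hp i).nonneg x)),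
    fun ε hε => ?_⟩
  obtain ⟨δ, hδ, hnear⟩ := Metric.equicontinuousAt_iff.1 hfc (ε / 2) (half_pos hε)
  set S := {x | δ ≤ dist x x₀}
  have hS : MeasurableSet S :=
    measurableSet_le measurable_const (continuous_id.dist continuous_const).measurable
  have hpoint : ∀ i x,
      |f i x| * p i x ≤ (|f i x₀| + ε / 2) * p i x + M * S.indicator (p i) x := by
    intro i x
    have hpx : 0 ≤ p i x := (hp i).nonneg x
    by_cases hx : x ∈ S
    · rw [Set.indicator_of_mem hx]
      nlinarith [hfM i x, abs_nonneg (f i x₀)]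
    · rw [Set.indicator_of_notMem hx, mul_zero, add_zero]
      have hdist := hnear x (not_le.1 hx) i
      rw [Real.dist_eq] at hdist
      gcongr
      linarith [abs_sub_abs_le_abs_sub (f i x) (f i x₀), abs_sub_comm (f i x₀) (f i x)]
  have hbound : ∀ i,
      ∫ x, |f i x| * p i x ∂μ ≤ |f i x₀| + ε / 2 + M * ∫ x in S, p i x ∂μ := by
    intro i
    have hnonneg x : 0 ≤ |f i x| * p i x := mul_nonneg (abs_nonneg _) ((hp i).nonneg x)
    have hind := ((hp i).integrable.indicator hS).const_mul M
    calc ∫ x, |f i x| * p i x ∂μ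
        ≤ ∫ x, ((|f i x₀| + ε / 2) * p i x + M * S.indicator (p i) x) ∂μ :=
          integral_mono_of_nonneg (ae_of_all _ hnonneg)
            (((hp i).integrable.const_mul _).add hind) (ae_of_all _ (hpoint i))
      _ = _ := by
          rw [integral_add ((hp i).integrable.const_mul _) hind, integral_const_mul,
            integral_const_mul, integral_indicator hS, (hp i).integral_eq_one, mul_one]
  have hlim : Tendsto (fun i => |f i x₀| + ε / 2 + M * ∫ x in S, p i x ∂μ) l (𝓝 (ε / 2)) := by
    simpa using ((hf₀.abs.add_const (ε / 2)).add ((hpc δ hδ).const_mul M))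
  filter_upwards [hlim.eventually (gt_mem_nhds (half_lt_self hε))] with i hi
  exact (hbound i).trans_lt hi

end Concentration

theorem stmt17_general (pdim qdim : ℕ)
    (Θα : Set (EuclideanSpace ℝ (Fin pdim))) (Θβ : Set (EuclideanSpace ℝ (Fin qdim)))
    (αstar : EuclideanSpace ℝ (Fin pdim)) (hαstar : αstar ∈ Θα)
    (β0 : EuclideanSpace ℝ (Fin qdim)) (hβ0 : β0 ∈ Θβ)
    (μα : Measure ↥Θα) (μβ : Measure ↥Θβ) [SigmaFinite μα] [SigmaFinite μβ]
    (pα : ℕ → ↥Θα → ℝ) (pβ : ℕ → ↥Θβ → ℝ)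
    (hpαnonneg : ∀ n a, 0 ≤ pα n a)
    (hpαdens : ∀ n, ∫ a, pα n a ∂μα = 1) (hpαint : ∀ n, Integrable (pα n) μα)
    (hpβnonneg : ∀ n b, 0 ≤ pβ n b)
    (hpβdens : ∀ n, ∫ b, pβ n b ∂μβ = 1) (hpβint : ∀ n, Integrable (pβ n) μβ)
    (B : ℕ → ↥Θα → ↥Θβ → ℝ)
    (hBmeas : ∀ n, Measurable (fun x : ↥Θα × ↥Θβ => B n x.1 x.2))
    (lam : ℝ)
    (hconcα : ∀ δ > (0 : ℝ),
      Tendsto (fun n => ∫ a in {a : ↥Θα | δ ≤ ‖(a : EuclideanSpace ℝ (Fin pdim)) - αstar‖},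
        pα n a ∂μα) atTop (nhds 0))
    (hconcβ : ∀ δ > (0 : ℝ),
      Tendsto (fun n => ∫ b in {b : ↥Θβ | δ ≤ ‖(b : EuclideanSpace ℝ (Fin qdim)) - β0‖},
        pβ n b ∂μβ) atTop (nhds 0))
    (M : ℝ) (hBbd : ∀ n a b, |B n a b| ≤ M)
    (L : ℝ) (hBlip : ∀ n (a a' : ↥Θα) (b b' : ↥Θβ),
      |B n a b - B n a' b'|
        ≤ L * (‖(a : EuclideanSpace ℝ (Fin pdim)) - (a' : EuclideanSpace ℝ (Fin pdim))‖
            + ‖(b : EuclideanSpace ℝ (Fin qdim)) - (b' : EuclideanSpace ℝ (Fin qdim))‖))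
    (hB0 : Tendsto (fun n => B n ⟨αstar, hαstar⟩ ⟨β0, hβ0⟩) atTop (nhds 0)) :
    (∀ n, Real.exp (-(|lam| * M))
        ≤ ∫ x, Real.exp (lam * B n x.1 x.2) * (pα n x.1 * pβ n x.2) ∂(μα.prod μβ)) ∧
    Tendsto (fun n => ∫ x,
        |Real.exp (lam * B n x.1 x.2) * (pα n x.1 * pβ n x.2)
            / (∫ x', Real.exp (lam * B n x'.1 x'.2) * (pα n x'.1 * pβ n x'.2) ∂(μα.prod μβ))
          - pα n x.1 * pβ n x.2| ∂(μα.prod μβ))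
      atTop (nhds 0) := by
  have hpα n : IsProbabilityDensity μα (pα n) := ⟨hpαnonneg n, hpαint n, hpαdens n⟩
  have hpβ n : IsProbabilityDensity μβ (pβ n) := ⟨hpβnonneg n, hpβint n, hpβdens n⟩
  have hp n := (hpα n).prod (hpβ n)
  have hg n : AEStronglyMeasurable (fun x : ↥Θα × ↥Θβ => lam * B n x.1 x.2) (μα.prod μβ) :=
    ((hBmeas n).const_mul lam).aestronglyMeasurable
  have hgK n (x : ↥Θα × ↥Θβ) : |lam * B n x.1 x.2| ≤ |lam| * M := by
    rw [abs_mul]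
    exact mul_le_mul_of_nonneg_left (hBbd n x.1 x.2) (abs_nonneg lam)
  refine ⟨fun n => (hp n).exp_neg_le_integral_exp_mul (hg n) (hgK n), ?_⟩
  have hconc : ConcentratesAt (μα.prod μβ) atTop (fun n x => pα n x.1 * pβ n x.2)
      (⟨αstar, hαstar⟩, ⟨β0, hβ0⟩) :=
    ConcentratesAt.prod hpα hpβ
      (fun δ hδ => by simpa only [Subtype.dist_eq, dist_eq_norm] using hconcα δ hδ)
      (fun δ hδ => by simpa only [Subtype.dist_eq, dist_eq_norm] using hconcβ δ hδ)
  have hequi : EquicontinuousAt (fun n (x : ↥Θα × ↥Θβ) => lam * B n x.1 x.2)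
      (⟨αstar, hαstar⟩, ⟨β0, hβ0⟩) := by
    refine (LipschitzWith.uniformEquicontinuous _ _ fun n =>
      lipschitzWith_uncurry_of_abs_sub_le (f := fun a b => lam * B n a b) (L := |lam| * L)
        fun a a' b b' => ?_).equicontinuous _
    rw [← mul_sub, abs_mul, mul_assoc, Subtype.dist_eq, Subtype.dist_eq, dist_eq_norm,
      dist_eq_norm]
    exact mul_le_mul_of_nonneg_left (hBlip n a a' b b') (abs_nonneg lam)
  have hdev := hconc.tendsto_integral_abs_mul hp hgK hequi
    (by simpa using hB0.const_mul lam)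
  refine squeeze_zero (fun n => integral_nonneg fun x => abs_nonneg _)
    (fun n => (hp n).integral_abs_tilt_sub_le (hg n) (hgK n)) ?_
  simpa using hdev.const_mul (2 * Real.exp (|lam| * M) * Real.exp (|lam| * M))

/-- Deterministic, hypothesis-explicit form of Lemma 1. Let
`Θ_α ⊆ ℝ^p`, `Θ_β ⊆ ℝ^q` be measurable sets with σ-finite reference measures, `p_n^α,
p_n^β` probability densities concentrating at `α*` and `β⁰`, and `B_n` uniformly bounded,
uniformly Lipschitz moment functions with `B_n(α*, β⁰) → 0`. Then, with
`z_n = ∬ exp(λ·B_n)·p_n^α·p_n^β ≥ exp(−|λ|·M) > 0`, the entropically tilted posterior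
converges to the original posterior in total variation. -/
theorem stmt17 (pdim qdim : ℕ)
    (Θα : Set (EuclideanSpace ℝ (Fin pdim))) (Θβ : Set (EuclideanSpace ℝ (Fin qdim)))
    (hΘα : MeasurableSet Θα) (hΘβ : MeasurableSet Θβ)
    (αstar : EuclideanSpace ℝ (Fin pdim)) (hαstar : αstar ∈ Θα)
    (β0 : EuclideanSpace ℝ (Fin qdim)) (hβ0 : β0 ∈ Θβ)
    (μα : Measure ↥Θα) (μβ : Measure ↥Θβ) [SigmaFinite μα] [SigmaFinite μβ]
    (pα : ℕ → ↥Θα → ℝ) (pβ : ℕ → ↥Θβ → ℝ)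
    (hpαmeas : ∀ n, Measurable (pα n)) (hpαnonneg : ∀ n a, 0 ≤ pα n a)
    (hpαdens : ∀ n, ∫ a, pα n a ∂μα = 1) (hpαint : ∀ n, Integrable (pα n) μα)
    (hpβmeas : ∀ n, Measurable (pβ n)) (hpβnonneg : ∀ n b, 0 ≤ pβ n b)
    (hpβdens : ∀ n, ∫ b, pβ n b ∂μβ = 1) (hpβint : ∀ n, Integrable (pβ n) μβ)
    (B : ℕ → ↥Θα → ↥Θβ → ℝ)
    (hBmeas : ∀ n, Measurable (fun x : ↥Θα × ↥Θβ => B n x.1 x.2))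
    (lam : ℝ)
    (hconcα : ∀ δ > (0 : ℝ),
      Tendsto (fun n => ∫ a in {a : ↥Θα | δ ≤ ‖(a : EuclideanSpace ℝ (Fin pdim)) - αstar‖},
        pα n a ∂μα) atTop (nhds 0))
    (hconcβ : ∀ δ > (0 : ℝ),
      Tendsto (fun n => ∫ b in {b : ↥Θβ | δ ≤ ‖(b : EuclideanSpace ℝ (Fin qdim)) - β0‖},
        pβ n b ∂μβ) atTop (nhds 0))
    (M : ℝ) (hBbd : ∀ n a b, |B n a b| ≤ M)
    (L : ℝ) (hBlip : ∀ n (a a' : ↥Θα) (b b' : ↥Θβ),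
      |B n a b - B n a' b'|
        ≤ L * (‖(a : EuclideanSpace ℝ (Fin pdim)) - (a' : EuclideanSpace ℝ (Fin pdim))‖
            + ‖(b : EuclideanSpace ℝ (Fin qdim)) - (b' : EuclideanSpace ℝ (Fin qdim))‖))
    (hB0 : Tendsto (fun n => B n ⟨αstar, hαstar⟩ ⟨β0, hβ0⟩) atTop (nhds 0)) :
    (∀ n, Real.exp (-(|lam| * M))
        ≤ ∫ x, Real.exp (lam * B n x.1 x.2) * (pα n x.1 * pβ n x.2) ∂(μα.prod μβ)) ∧
    Tendsto (fun n => ∫ x,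
        |Real.exp (lam * B n x.1 x.2) * (pα n x.1 * pβ n x.2)
            / (∫ x', Real.exp (lam * B n x'.1 x'.2) * (pα n x'.1 * pβ n x'.2) ∂(μα.prod μβ))
          - pα n x.1 * pβ n x.2| ∂(μα.prod μβ))
      atTop (nhds 0) :=
  stmt17_general pdim qdim Θα Θβ αstar hαstar β0 hβ0 μα μβ pα pβ hpαnonneg hpαdens hpαint hpβnonneg
    hpβdens hpβint B hBmeas lam hconcα hconcβ M hBbd L hBlip hB0
end
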